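/- arXiv:2204.06413 — 11 statements merged into one kernel-verified Lean document; each statement's English description precedes it below -/
import Mathlib

section
/- Let π be a cyclic permutation of a finite set U (a single cycle with no fixed points), let A be a proper subset of U, and let f : A → B be a surjective map onto a finite set B. Then the cardinality of the set {(a, f(a)) : a ∈ A} ∪ {(π(a), f(a)) : a ∈ A} is at least #A + #B. -/
/-- If `π` is a cyclic permutation of a finite set `U` (a single cycle with
no fixed points), `A` is a proper subset of `U`, and `f` is surjective from `A` onto `B`, then
`#({(a, f a) : a ∈ A} ∪ {(π a, f a) : a ∈ A}) ≥ #A + #B`. -/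
theorem cyclic_permutation_map {U B : Type*} [Fintype U] [DecidableEq U]
    [Fintype B] [DecidableEq B]
    (π : Equiv.Perm U) (hcyc : π.IsCycle) (hfix : ∀ u : U, π u ≠ u)
    (A : Finset U) (hA : A ≠ Finset.univ)
    (f : U → B) (hf : ∀ b : B, ∃ a ∈ A, f a = b) :
    A.card + Fintype.card B ≤
      ((A.image fun a => (a, f a)) ∪ (A.image fun a => (π a, f a))).card := by
  classical
  set T1 := A.image fun a => (a, f a) with hT1
  set T2 := A.image fun a => (π a, f a) with hT2
  have key : ∀ b : B, ∃ a, a ∈ A ∧ f a = b ∧ (π a, b) ∉ T1 := by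
    intro b
    by_contra hcon
    push_neg at hcon
    set S := A.filter (fun a => f a = b) with hS
    obtain ⟨a0, ha0A, ha0f⟩ := hf b
    have ha0S : a0 ∈ S := Finset.mem_filter.2 ⟨ha0A, ha0f⟩
    have hclosed : ∀ a ∈ S, π a ∈ S := by
      intro a haS
      obtain ⟨ha, hfa⟩ := Finset.mem_filter.1 haS
      have h := hcon a ha hfa
      simp only [hT1, Finset.mem_image] at h
      obtain ⟨c, hc, hce⟩ := h
      have h1 : c = π a := (Prod.mk.injEq _ _ _ _ ▸ hce).1
      have h2 : f c = b := (Prod.mk.injEq _ _ _ _ ▸ hce).2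
      exact Finset.mem_filter.2 ⟨h1 ▸ hc, h1 ▸ h2⟩
    have hinvclosed : ∀ a ∈ S, π⁻¹ a ∈ S := by
      intro a haS
      obtain ⟨y, hy, hyeq⟩ := Finset.surj_on_of_inj_on_of_card_le
        (s := S) (t := S) (fun x _ => π x) (fun x hx => hclosed x hx)
        (fun x y _ _ h => π.injective h) le_rfl a haS
      have : π⁻¹ a = y := by
        rw [hyeq]; simp
      rwa [this]
    have hzpow : ∀ n : ℤ, ∀ a ∈ S, (π ^ n) a ∈ S := by
      intro n
      induction n using Int.induction_on with
      | zero => intro a ha; simpa using ha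
      | succ k ih =>
          intro a ha
          have : (π ^ ((k : ℤ) + 1)) a = π ((π ^ (k : ℤ)) a) := by
            rw [add_comm, zpow_one_add]; rfl
          rw [this]
          exact hclosed _ (ih a ha)
      | pred k ih =>
          intro a ha
          have : (π ^ (-(k : ℤ) - 1)) a = π⁻¹ ((π ^ (-(k : ℤ))) a) := by
            have he : -(k : ℤ) - 1 = (-1) + (-(k : ℤ)) := by ring
            rw [he, zpow_add, zpow_neg_one]; rfl
          rw [this]
          exact hinvclosed _ (ih a ha)
    have huniv : ∀ u : U, u ∈ S := by
      intro u
      obtain ⟨n, hn⟩ := hcyc.sameCycle (hfix a0) (hfix u)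
      exact hn ▸ hzpow n a0 ha0S
    apply hA
    apply Finset.eq_univ_of_forall
    intro u
    exact (Finset.mem_filter.1 (huniv u)).1
  choose g hgA hgf hgnot using key
  set E : Finset (U × B) := Finset.univ.image (fun b : B => (π (g b), b)) with hE
  have hEcard : E.card = Fintype.card B := by
    rw [hE, Finset.card_image_of_injective _ (fun x y h => (Prod.mk.injEq _ _ _ _ ▸ h).2),
      Finset.card_univ]
  have hT1card : T1.card = A.card := by
    rw [hT1]
    apply Finset.card_image_of_injective
    intro x y h
    exact (Prod.mk.injEq _ _ _ _ ▸ h).1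
  have hEsub : E ⊆ T2 := by
    intro p hp
    simp only [hE, Finset.mem_image, Finset.mem_univ, true_and] at hp
    obtain ⟨b, hb⟩ := hp
    rw [hT2]
    exact Finset.mem_image.2 ⟨g b, hgA b, by rw [hgf b]; exact hb⟩
  have hdisj : Disjoint T1 E := by
    rw [Finset.disjoint_right]
    intro p hp hpT1
    simp only [hE, Finset.mem_image, Finset.mem_univ, true_and] at hp
    obtain ⟨b, hb⟩ := hp
    exact hgnot b (hb ▸ hpT1)
  calc A.card + Fintype.card B = (T1 ∪ E).card := by
        rw [Finset.card_union_of_disjoint hdisj, hT1card, hEcard]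
    _ ≤ (T1 ∪ T2).card := Finset.card_le_card
        (Finset.union_subset_union_right hEsub)
end

section
/- Let A, B ⊆ ℝ be closed sets whose union A ∪ B is a compact interval I. If A ∩ B is a singleton, then both A and B are intervals. -/
lemma aux_mem_Icc (A B : Set ℝ) (hA : IsClosed A) (hB : IsClosed B)
    (x : ℝ) (hx : A ∩ B = {x}) (p r : ℝ) (hp : p ∈ A) (hr : r ∈ B)
    (hsub : Set.Icc p r ⊆ A ∪ B) (hpr : p ≤ r) : x ∈ Set.Icc p r := by
  have h := (isPreconnected_closed_iff.mp (isPreconnected_Icc (a := p) (b := r)))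
    A B hA hB hsub ⟨p, ⟨le_refl p, hpr⟩, hp⟩ ⟨r, ⟨hpr, le_refl r⟩, hr⟩
  obtain ⟨y, hy1, hy2⟩ := h
  have : y = x := by
    have : y ∈ ({x} : Set ℝ) := hx ▸ hy2
    simpa using this
  exact this ▸ hy1

/-- If `A, B ⊆ ℝ` are closed sets whose union is a compact interval `[a, b]`
and `A ∩ B` is a singleton, then both `A` and `B` are intervals (order-convex sets). -/
theorem singleton_intersection_implies_intervals (A B : Set ℝ)
    (hA : IsClosed A) (hB : IsClosed B)
    (a b : ℝ) (hab : a ≤ b) (hU : A ∪ B = Set.Icc a b)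
    (x : ℝ) (hx : A ∩ B = {x}) :
    A.OrdConnected ∧ B.OrdConnected := by
  have hxAB : x ∈ A ∩ B := by rw [hx]; rfl
  have key : ∀ (C D : Set ℝ), IsClosed C → IsClosed D → C ∪ D = Set.Icc a b →
      C ∩ D = {x} → C.OrdConnected := by
    intro C D hC hD hCD hxCD
    constructor
    intro p hp q hq r hr
    by_contra hrC
    have hxC : x ∈ C := by
      have : x ∈ C ∩ D := by rw [hxCD]; rfl
      exact this.1
    have hsub : Set.Icc p q ⊆ C ∪ D := by
      rw [hCD]
      have hp' : p ∈ Set.Icc a b := by rw [← hCD]; exact Set.mem_union_left D hp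
      have hq' : q ∈ Set.Icc a b := by rw [← hCD]; exact Set.mem_union_left D hq
      exact Set.Icc_subset_Icc hp'.1 hq'.2
    have hrD : r ∈ D := by
      rcases hsub hr with h | h
      · exact absurd h hrC
      · exact h
    have h1 : x ∈ Set.Icc p r :=
      aux_mem_Icc C D hC hD x hxCD p r hp hrD
        (fun y hy => hsub ⟨hy.1, le_trans hy.2 hr.2⟩) hr.1
    have h2 : x ∈ Set.Icc r q := by
      have := aux_mem_Icc D C hD hC x (by rw [Set.inter_comm]; exact hxCD) r q hrD hq
        (fun y hy => (Set.union_comm C D ▸ hsub ⟨le_trans hr.1 hy.1, hy.2⟩))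
        hr.2
      exact this
    have : r = x := le_antisymm h2.1 h1.2
    exact hrC (this ▸ hxC)
  exact ⟨key A B hA hB hU hx, key B A hB hA (Set.union_comm A B ▸ hU)
    (Set.inter_comm A B ▸ hx)⟩
end

section
/- For d ≥ 1 and a positive integer vector (m₁,…,m_d), with F = {0, −e₁, …, −e_d} ⊆ ℤ^d and S = ∏_{i=1}^d {0,1,…,m_i−1}, the cardinality of the Minkowski difference F − S = {f − s : f ∈ F, s ∈ S} equals m₁⋯m_d · (1 + 1/m₁ + ⋯ + 1/m_d), i.e. the volume of the box plus the volumes of its d faces: #(F−S) = m₁⋯m_d + Σ_{i=1}^d (m₁⋯m_d)/m_i. -/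
/-- Points of the lattice `ℤ^d`. -/
abbrev Zd (d : ℕ) := Fin d → ℤ

/-- Occurrences of the pattern `p` (with support `S`) in the configuration `x`. -/
def occs {d : ℕ} {A : Type*} (x : Zd d → A) (S : Finset (Zd d)) (p : Zd d → A) : Set (Zd d) :=
  {n | ∀ s ∈ S, x (n + s) = p s}

/-- `x` and `y` differ on finitely many sites. -/
def IsAsymptoticPair {d : ℕ} {A : Type*} (x y : Zd d → A) : Prop :=
  {v | x v ≠ y v}.Finite

/-- Indistinguishable asymptotic pair. -/
def Indistinguishable {d : ℕ} {A : Type*} (x y : Zd d → A) : Prop :=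
  IsAsymptoticPair x y ∧
  ∀ (S : Finset (Zd d)) (p : Zd d → A),
    (occs x S p \ occs y S p).ncard = (occs y S p \ occs x S p).ncard

/-- The set `F = {0, -e₁, …, -e_d}`. -/
def flipF (d : ℕ) : Finset (Zd d) :=
  insert 0 (Finset.univ.image fun i : Fin d => -(Pi.single i 1 : Zd d))

/-- The flip condition for an asymptotic pair over the alphabet `{0,1,…,d}`. -/
def FlipCondition {d : ℕ} (x y : Zd d → Fin (d + 1)) : Prop :=
  {v | x v ≠ y v} = ↑(flipF d) ∧
  Set.BijOn x ↑(flipF d) Set.univ ∧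
  x 0 = 0 ∧
  ∀ n ∈ flipF d, y n = x n - 1

/-- The language of `x` with support `S`, seen as functions `↥S → A`. -/
def langOn {d : ℕ} {A : Type*} (x : Zd d → A) (S : Finset (Zd d)) : Set (S → A) :=
  {q | ∃ n : Zd d, ∀ s : S, x (n + (s : Zd d)) = q s}

/-- Minkowski difference `F - S` of two finite subsets of `ℤ^d`. -/
def fms {d : ℕ} (F S : Finset (Zd d)) : Finset (Zd d) := Finset.image₂ (· - ·) F S

/-- Nearest-neighbour adjacency on `ℤ^d`. -/
def ZAdj {d : ℕ} (u v : Zd d) : Prop :=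
  ∃ i : Fin d, v - u = Pi.single i 1 ∨ u - v = Pi.single i 1

/-- A finite subset of `ℤ^d` is connected for the nearest-neighbour graph. -/
def FinsetConnected {d : ℕ} (S : Finset (Zd d)) : Prop :=
  ∀ u ∈ S, ∀ v ∈ S, Relation.ReflTransGen (fun a b => ZAdj a b ∧ a ∈ S ∧ b ∈ S) u v

/-- The scalar product `n · α`. -/
def dotA {d : ℕ} (α : Fin d → ℝ) (n : Zd d) : ℝ := ∑ i, (n i : ℝ) * α i

/-- Lower `d`-dimensional Sturmian configuration with slope `α` and intercept `ρ`. -/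
noncomputable def sLow {d : ℕ} (α : Fin d → ℝ) (ρ : ℝ) (n : Zd d) : ℤ :=
  ∑ i, (⌊α i + dotA α n + ρ⌋ - ⌊dotA α n + ρ⌋)

/-- Lower characteristic `d`-dimensional Sturmian configuration with slope `α`. -/
noncomputable def cLow {d : ℕ} (α : Fin d → ℝ) (n : Zd d) : ℤ :=
  ∑ i, (⌊α i + dotA α n⌋ - ⌊dotA α n⌋)

/-- Upper characteristic `d`-dimensional Sturmian configuration with slope `α`. -/
noncomputable def cUp {d : ℕ} (α : Fin d → ℝ) (n : Zd d) : ℤ :=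
  ∑ i, (⌈α i + dotA α n⌉ - ⌈dotA α n⌉)

/-- `{1, α₁, …, α_d}` is linearly independent over `ℚ`. -/
def TotallyIrrational {d : ℕ} (α : Fin d → ℝ) : Prop :=
  ∀ (a : ℚ) (q : Fin d → ℚ), ((a : ℝ) + ∑ i, (q i : ℝ) * α i = 0) → a = 0 ∧ q = 0

/-- For `F = {0, -e₁, …, -e_d}` and `S` the box `∏ᵢ {0,…,mᵢ-1}`,
`#(F - S) = m₁⋯m_d + ∑ᵢ (m₁⋯m_d)/mᵢ`. -/
theorem card_fms_box (d : ℕ) (hd : 1 ≤ d) (m : Fin d → ℕ) (hm : ∀ i, 0 < m i) :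
    (fms (flipF d) (Fintype.piFinset fun i => Finset.Ico (0 : ℤ) (m i))).card =
      ∏ i, m i + ∑ i : Fin d, ∏ j ∈ Finset.univ.erase i, m j := by
  classical
  set S := Fintype.piFinset fun i => Finset.Ico (0 : ℤ) (m i) with hS
  set A := Fintype.piFinset fun j : Fin d => Finset.Icc (1 - (m j : ℤ)) 0 with hA
  set B : Fin d → Finset (Zd d) := fun i => Fintype.piFinset fun j : Fin d =>
    if j = i then {(-(m i : ℤ))} else Finset.Icc (1 - (m j : ℤ)) 0 with hB
  have hmemA : ∀ v : Zd d, v ∈ A ↔ ∀ j, 1 - (m j : ℤ) ≤ v j ∧ v j ≤ 0 := by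
    intro v
    simp [hA, Fintype.mem_piFinset]
  have hmemB : ∀ (i : Fin d) (v : Zd d), v ∈ B i ↔
      v i = -(m i : ℤ) ∧ ∀ j, j ≠ i → 1 - (m j : ℤ) ≤ v j ∧ v j ≤ 0 := by
    intro i v
    simp only [hB, Fintype.mem_piFinset]
    constructor
    · intro h
      constructor
      · have := h i; simpa using this
      · intro j hj; have := h j; simp [hj] at this; omega
    · rintro ⟨h1, h2⟩ j
      by_cases hj : j = i
      · subst hj; simp [h1]
      · simp [hj]; have := h2 j hj; omega
  have hmemS : ∀ s : Zd d, s ∈ S ↔ ∀ j, 0 ≤ s j ∧ s j < (m j : ℤ) := by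
    intro s; simp [hS, Fintype.mem_piFinset]
  have hEq : fms (flipF d) S = A ∪ Finset.univ.biUnion B := by
    ext v
    simp only [fms, Finset.mem_image₂, Finset.mem_union, Finset.mem_biUnion,
      Finset.mem_univ, true_and]
    constructor
    · rintro ⟨f, hf, s, hs, rfl⟩
      rw [hmemS] at hs
      rcases Finset.mem_insert.mp hf with rfl | hf
      · left
        rw [hmemA]
        intro j
        have := hs j
        simp only [Pi.sub_apply, Pi.zero_apply]
        omega
      · obtain ⟨i, -, rfl⟩ := Finset.mem_image.mp hf
        by_cases hc : s i = (m i : ℤ) - 1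
        · right
          refine ⟨i, ?_⟩
          rw [hmemB]
          constructor
          · simp [Pi.single_eq_same, hc]; ring
          · intro j hj
            have := hs j
            simp [Pi.single_eq_of_ne hj]
            omega
        · left
          rw [hmemA]
          intro j
          by_cases hj : j = i
          · subst hj
            have := hs j
            simp [Pi.single_eq_same]
            omega
          · have := hs j
            simp [Pi.single_eq_of_ne hj]
            omega
    · rintro (hv | ⟨i, hv⟩)
      · rw [hmemA] at hv
        refine ⟨0, Finset.mem_insert_self _ _, -v, ?_, by simp⟩
        rw [hmemS]
        intro j
        have := hv j
        simp only [Pi.neg_apply]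
        omega
      · rw [hmemB] at hv
        obtain ⟨h1, h2⟩ := hv
        refine ⟨-(Pi.single i 1), ?_, -v - Pi.single i 1, ?_, by ring⟩
        · exact Finset.mem_insert_of_mem (Finset.mem_image.mpr ⟨i, Finset.mem_univ _, rfl⟩)
        · rw [hmemS]
          intro j
          by_cases hj : j = i
          · subst hj
            have := hm j
            simp [Pi.single_eq_same, h1]
            omega
          · have := h2 j hj
            simp [Pi.single_eq_of_ne hj]
            omega
  have hAB : ∀ i, Disjoint A (B i) := by
    intro i
    rw [Finset.disjoint_left]
    intro v hvA hvB
    rw [hmemA] at hvA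
    rw [hmemB] at hvB
    have := hvA i
    have := hvB.1
    have := hm i
    omega
  have hBB : ∀ i j : Fin d, i ≠ j → Disjoint (B i) (B j) := by
    intro i j hij
    rw [Finset.disjoint_left]
    intro v hvi hvj
    rw [hmemB] at hvi hvj
    have h1 := hvi.2 j (Ne.symm hij)
    have h2 := hvj.1
    have := hm j
    omega
  have hcardA : A.card = ∏ i, m i := by
    rw [hA, Fintype.card_piFinset]
    refine Finset.prod_congr rfl fun i _ => ?_
    rw [Int.card_Icc]
    omega
  have hcardB : ∀ i, (B i).card = ∏ j ∈ Finset.univ.erase i, m j := by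
    intro i
    rw [hB, Fintype.card_piFinset]
    rw [← Finset.mul_prod_erase Finset.univ _ (Finset.mem_univ i)]
    simp only [eq_self_iff_true, if_true, Finset.card_singleton, one_mul]
    refine Finset.prod_congr rfl fun j hj => ?_
    rw [if_neg (Finset.ne_of_mem_erase hj), Int.card_Icc]
    omega
  rw [hEq, Finset.card_union_of_disjoint, Finset.card_biUnion, hcardA]
  · congr 1
    exact Finset.sum_congr rfl fun i _ => hcardB i
  · intro i _ j _ hij
    exact hBB i j hij
  · rw [Finset.disjoint_right]
    intro v hv
    obtain ⟨i, -, hvi⟩ := Finset.mem_biUnion.mp hv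
    intro hvA
    exact (Finset.disjoint_left.mp (hAB i)) hvA hvi
end

section
/- If (x, y) is an indistinguishable asymptotic pair in Σ^{ℤ^d} and A ∈ GL_d(ℤ) is an invertible integer matrix, then (x∘A, y∘A) is an indistinguishable asymptotic pair. -/
/-- Indistinguishability is preserved by `GL_d(ℤ)`:
if `(x, y)` is an indistinguishable asymptotic pair and `A` is an invertible integer matrix,
then `(x ∘ A, y ∘ A)` is an indistinguishable asymptotic pair. -/
theorem indistinguishable_glZ {d : ℕ} {A : Type*} (x y : Zd d → A)
    (h : Indistinguishable x y) (M : Matrix (Fin d) (Fin d) ℤ) (hM : IsUnit M.det) :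
    Indistinguishable (fun n => x (M.mulVec n)) (fun n => y (M.mulVec n)) := by
  obtain ⟨hfin, hcount⟩ := h
  have hInv : Invertible M := M.invertibleOfIsUnitDet hM
  set N := ⅟M with hN
  have hNM : ∀ v : Zd d, N.mulVec (M.mulVec v) = v := by
    intro v; rw [Matrix.mulVec_mulVec, hN, invOf_mul_self, Matrix.one_mulVec]
  have hMN : ∀ v : Zd d, M.mulVec (N.mulVec v) = v := by
    intro v; rw [Matrix.mulVec_mulVec, hN, mul_invOf_self, Matrix.one_mulVec]
  have hinj : Function.Injective (M.mulVec : Zd d → Zd d) :=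
    Function.LeftInverse.injective hNM
  have hNinj : Function.Injective (N.mulVec : Zd d → Zd d) :=
    Function.LeftInverse.injective hMN
  have hpre : ∀ B : Set (Zd d), (M.mulVec : Zd d → Zd d) ⁻¹' B = N.mulVec '' B := by
    intro B
    ext v
    simp only [Set.mem_preimage, Set.mem_image]
    constructor
    · intro hv; exact ⟨M.mulVec v, hv, hNM v⟩
    · rintro ⟨b, hb, rfl⟩; rwa [hMN]
  constructor
  · have heq : {v | x (M.mulVec v) ≠ y (M.mulVec v)}
        = (M.mulVec : Zd d → Zd d) ⁻¹' {v | x v ≠ y v} := rfl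
    show ({v | x (M.mulVec v) ≠ y (M.mulVec v)} : Set (Zd d)).Finite
    rw [heq]
    exact hfin.preimage hinj.injOn
  · intro S p
    have key : ∀ z : Zd d → A,
        occs (fun n => z (M.mulVec n)) S p
          = (M.mulVec : Zd d → Zd d) ⁻¹'
              occs z (S.image M.mulVec) (fun s => p (N.mulVec s)) := by
      intro z
      ext n
      simp only [occs, Set.mem_setOf_eq, Set.mem_preimage, Finset.mem_image]
      constructor
      · rintro hz t ⟨s, hs, rfl⟩
        rw [← Matrix.mulVec_add, hNM]
        exact hz s hs
      · intro hz s hs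
        have := hz (M.mulVec s) ⟨s, hs, rfl⟩
        rwa [← Matrix.mulVec_add, hNM] at this
    rw [key x, key y, ← Set.preimage_diff, ← Set.preimage_diff, hpre, hpre,
      Set.ncard_image_of_injective _ hNinj, Set.ncard_image_of_injective _ hNinj]
    exact hcount _ _
end

section
/- Let x, y ∈ Σ₁^{ℤ^d} be an indistinguishable asymptotic pair and φ : Σ₁^{ℤ^d} → Σ₂^{ℤ^d} a sliding block code (given by a finite window D ⊆ ℤ^d and a local rule Φ : Σ₁^D → Σ₂ with φ(x)(u) = Φ(v ↦ x(u+v))). Then (φ(x), φ(y)) is an indistinguishable asymptotic pair. -/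
open Classical in
/-- Counting lemma: if the difference `P \ Q` is contained in a finite set `↑N`, then the
number of elements of `N` in `P` splits as those in `P ∩ Q` plus `(P \ Q).ncard`. -/
lemma filter_card_split {α : Type*} (P Q : Set α) (N : Finset α)
    (hPQ : P \ Q ⊆ ↑N) :
    (N.filter (fun n => n ∈ P)).card
      = (N.filter (fun n => n ∈ P ∧ n ∈ Q)).card + (P \ Q).ncard := by
  classical
  have h1 : P \ Q = ↑(N.filter (fun n => n ∈ P ∧ n ∉ Q)) := by
    ext n
    simp only [Finset.coe_filter, Set.mem_setOf_eq, Set.mem_diff]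
    exact ⟨fun hn => ⟨hPQ hn, hn.1, hn.2⟩, fun hn => hn.2⟩
  rw [h1, Set.ncard_coe_finset]
  have h2 : N.filter (fun n => n ∈ P ∧ n ∈ Q)
      = (N.filter (fun n => n ∈ P)).filter (fun n => n ∈ Q) := by
    rw [Finset.filter_filter]
  have h3 : N.filter (fun n => n ∈ P ∧ n ∉ Q)
      = (N.filter (fun n => n ∈ P)).filter (fun n => n ∉ Q) := by
    rw [Finset.filter_filter]
  rw [h2, h3]
  exact (Finset.card_filter_add_card_filter_not
    (s := N.filter (fun n => n ∈ P)) (p := fun n => n ∈ Q)).symm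

/-- Indistinguishability is preserved by sliding block codes: if `φ` is
given by a finite window `D` and a local rule `Φ` depending only on the coordinates in `D`,
then `(φ x, φ y)` is an indistinguishable asymptotic pair whenever `(x, y)` is. -/
theorem indistinguishable_sliding_block_code {d : ℕ} {A₁ A₂ : Type*}
    (x y : Zd d → A₁) (h : Indistinguishable x y)
    (D : Finset (Zd d)) (Φ : (Zd d → A₁) → A₂)
    (hΦ : ∀ u v : Zd d → A₁, (∀ w ∈ D, u w = v w) → Φ u = Φ v) :
    Indistinguishable (fun u => Φ (fun v => x (u + v))) (fun u => Φ (fun v => y (u + v))) := by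
  classical
  obtain ⟨hfin, hcount⟩ := h
  have a₀ : A₁ := x 0
  constructor
  · -- asymptotic pair
    apply Set.Finite.subset (Finset.image₂ (· - ·) hfin.toFinset D).finite_toSet
    intro u hu
    simp only [Set.mem_setOf_eq] at hu
    by_contra hmem
    apply hu
    apply hΦ
    intro w hw
    by_contra hne
    apply hmem
    refine Finset.mem_coe.2 (Finset.mem_image₂.2 ⟨u + w, hfin.mem_toFinset.2 hne, w, hw, ?_⟩)
    abel
  · intro S p
    set T : Finset (Zd d) := Finset.image₂ (· + ·) S D with hT
    set patt : (Zd d → A₁) → Zd d → Zd d → A₁ :=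
      fun z n t => if t ∈ T then z (n + t) else a₀ with hpatt
    set Ind : (Zd d → A₁) → Prop := fun q => ∀ s ∈ S, Φ (fun v => q (s + v)) = p s with hInd
    have hST : ∀ s ∈ S, ∀ w ∈ D, s + w ∈ T := fun s hs w hw =>
      Finset.mem_image₂.2 ⟨s, hs, w, hw, rfl⟩
    -- occurrence of p in the coded configuration ↔ Ind of the local pattern
    have hocc : ∀ z : Zd d → A₁, ∀ n : Zd d,
        n ∈ occs (fun u => Φ (fun v => z (u + v))) S p ↔ Ind (patt z n) := by
      intro z n
      have key : ∀ s ∈ S, Φ (fun v => z (n + s + v)) = Φ (fun v => patt z n (s + v)) := by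
        intro s hs
        apply hΦ
        intro w hw
        have hmem : s + w ∈ T := hST s hs w hw
        simp only [hpatt, hmem, if_true]
        rw [add_assoc]
      constructor
      · intro hn s hs
        rw [← key s hs]
        exact hn s hs
      · intro hn s hs
        show Φ (fun v => z (n + s + v)) = p s
        rw [key s hs]
        exact hn s hs
    set N : Finset (Zd d) := Finset.image₂ (· - ·) hfin.toFinset T with hN
    have hNpatt : ∀ n : Zd d, patt x n ≠ patt y n → n ∈ N := by
      intro n hne
      have hex : ∃ t ∈ T, x (n + t) ≠ y (n + t) := by
        by_contra hc
        push_neg at hc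
        apply hne
        funext t
        by_cases ht : t ∈ T
        · simp only [hpatt, ht, if_true]
          exact hc t ht
        · simp [hpatt, ht]
      obtain ⟨t, ht, hxy⟩ := hex
      refine Finset.mem_image₂.2 ⟨n + t, hfin.mem_toFinset.2 hxy, t, ht, ?_⟩
      abel
    have hcanon : ∀ (q : Zd d → A₁), (∀ t, t ∉ T → q t = a₀) →
        ∀ z : Zd d → A₁, ∀ n, (patt z n = q ↔ n ∈ occs z T q) := by
      intro q hq z n
      constructor
      · intro he t ht
        rw [← he]
        simp [hpatt, ht]
      · intro ho
        funext t
        by_cases ht : t ∈ T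
        · simpa [hpatt, ht] using ho t ht
        · simp [hpatt, ht, hq t ht]
    set QF : Finset (Zd d → A₁) :=
      (N.image (fun n => patt x n) ∪ N.image (fun n => patt y n)).filter Ind with hQF
    have hQcanon : ∀ q ∈ QF, ∀ t, t ∉ T → q t = a₀ := by
      intro q hq t ht
      have hm := (Finset.mem_filter.1 hq).1
      rcases Finset.mem_union.1 hm with h' | h' <;>
      · obtain ⟨m, _, rfl⟩ := Finset.mem_image.1 h'
        simp [hpatt, ht]
    -- biUnion decomposition
    have hsum : ∀ z : Zd d → A₁,
        (∀ n ∈ N, patt z n ∈ N.image (fun m => patt x m) ∪ N.image (fun m => patt y m)) →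
        (N.filter (fun n => Ind (patt z n))).card
          = ∑ q ∈ QF, (N.filter (fun n => patt z n = q)).card := by
      intro z hz
      have hbi : N.filter (fun n => Ind (patt z n))
          = QF.biUnion (fun q => N.filter (fun n => patt z n = q)) := by
        ext n
        simp only [Finset.mem_filter, Finset.mem_biUnion]
        constructor
        · rintro ⟨hnN, hind⟩
          exact ⟨patt z n, Finset.mem_filter.2 ⟨hz n hnN, hind⟩, hnN, rfl⟩
        · rintro ⟨q, hqQF, hnN, hq⟩
          exact ⟨hnN, hq ▸ (Finset.mem_filter.1 hqQF).2⟩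
      rw [hbi]
      apply Finset.card_biUnion
      intro q hq q' hq' hne
      simp only [Finset.disjoint_left, Finset.mem_filter]
      rintro n ⟨_, h1⟩ ⟨_, h2⟩
      exact hne (h1 ▸ h2 ▸ rfl)
    -- per-pattern count equality
    have hq_eq : ∀ q ∈ QF, (N.filter (fun n => patt x n = q)).card
        = (N.filter (fun n => patt y n = q)).card := by
      intro q hq
      have hc := hQcanon q hq
      have hx := hcanon q hc x
      have hy := hcanon q hc y
      have hdxy : occs x T q \ occs y T q ⊆ ↑N := by
        intro n hn
        apply hNpatt
        intro he
        exact hn.2 ((hy n).1 (he ▸ (hx n).2 hn.1))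
      have hdyx : occs y T q \ occs x T q ⊆ ↑N := by
        intro n hn
        apply hNpatt
        intro he
        exact hn.2 ((hx n).1 (he ▸ (hy n).2 hn.1))
      have ex := filter_card_split (occs x T q) (occs y T q) N hdxy
      have ey := filter_card_split (occs y T q) (occs x T q) N hdyx
      have hmid : N.filter (fun n => n ∈ occs x T q ∧ n ∈ occs y T q)
          = N.filter (fun n => n ∈ occs y T q ∧ n ∈ occs x T q) := by
        apply Finset.filter_congr
        intro n _
        exact and_comm
      have hfx : N.filter (fun n => patt x n = q) = N.filter (fun n => n ∈ occs x T q) :=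
        Finset.filter_congr (fun n _ => hx n)
      have hfy : N.filter (fun n => patt y n = q) = N.filter (fun n => n ∈ occs y T q) :=
        Finset.filter_congr (fun n _ => hy n)
      rw [hfx, hfy, ex, ey, hmid, hcount T q]
    -- total counts agree
    have hcards : (N.filter (fun n => n ∈ occs (fun u => Φ (fun v => x (u + v))) S p)).card
        = (N.filter (fun n => n ∈ occs (fun u => Φ (fun v => y (u + v))) S p)).card := by
      have h1 : N.filter (fun n => n ∈ occs (fun u => Φ (fun v => x (u + v))) S p)
          = N.filter (fun n => Ind (patt x n)) :=
        Finset.filter_congr (fun n _ => hocc x n)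
      have h2 : N.filter (fun n => n ∈ occs (fun u => Φ (fun v => y (u + v))) S p)
          = N.filter (fun n => Ind (patt y n)) :=
        Finset.filter_congr (fun n _ => hocc y n)
      rw [h1, h2, hsum x (fun n hn => Finset.mem_union_left _ (Finset.mem_image_of_mem _ hn)),
        hsum y (fun n hn => Finset.mem_union_right _ (Finset.mem_image_of_mem _ hn))]
      exact Finset.sum_congr rfl hq_eq
    have hdxy : occs (fun u => Φ (fun v => x (u + v))) S p
        \ occs (fun u => Φ (fun v => y (u + v))) S p ⊆ ↑N := by
      intro n hn
      apply hNpatt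
      intro he
      exact hn.2 ((hocc y n).2 (he ▸ (hocc x n).1 hn.1))
    have hdyx : occs (fun u => Φ (fun v => y (u + v))) S p
        \ occs (fun u => Φ (fun v => x (u + v))) S p ⊆ ↑N := by
      intro n hn
      apply hNpatt
      intro he
      exact hn.2 ((hocc x n).2 (he ▸ (hocc y n).1 hn.1))
    have ex := filter_card_split (occs (fun u => Φ (fun v => x (u + v))) S p)
      (occs (fun u => Φ (fun v => y (u + v))) S p) N hdxy
    have ey := filter_card_split (occs (fun u => Φ (fun v => y (u + v))) S p)
      (occs (fun u => Φ (fun v => x (u + v))) S p) N hdyx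
    have hmid : N.filter (fun n => n ∈ occs (fun u => Φ (fun v => x (u + v))) S p
          ∧ n ∈ occs (fun u => Φ (fun v => y (u + v))) S p)
        = N.filter (fun n => n ∈ occs (fun u => Φ (fun v => y (u + v))) S p
          ∧ n ∈ occs (fun u => Φ (fun v => x (u + v))) S p) := by
      apply Finset.filter_congr
      intro n _
      exact and_comm
    rw [hmid] at ex
    rw [hcards, ey] at ex
    omega
end

section
/- Let (x_n, y_n) be a sequence of indistinguishable asymptotic pairs in Σ^{ℤ^d} converging in the asymptotic (étale) relation to (x, y), i.e., x_n → x and y_n → y pointwise and there is a finite F ⊆ ℤ^d with x_n = y_n outside F for all large n. Then (x, y) is an indistinguishable asymptotic pair. -/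
/-- An étale limit of indistinguishable asymptotic pairs is an
indistinguishable asymptotic pair. -/
theorem indistinguishable_etale_limit {d : ℕ} {A : Type*}
    (X Y : ℕ → Zd d → A) (x y : Zd d → A)
    (hind : ∀ n, Indistinguishable (X n) (Y n))
    (hX : ∀ v : Zd d, ∃ N, ∀ n ≥ N, X n v = x v)
    (hY : ∀ v : Zd d, ∃ N, ∀ n ≥ N, Y n v = y v)
    (hF : ∃ F : Finset (Zd d), ∃ N, ∀ n ≥ N, ∀ v : Zd d, v ∉ F → X n v = Y n v) :
    Indistinguishable x y := by
  obtain ⟨F, N₀, hF⟩ := hF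
  choose NX hNX using hX
  choose NY hNY using hY
  have hxy : {v | x v ≠ y v} ⊆ ↑F := by
    intro v hv
    by_contra hvF
    apply hv
    have h1 := hNX v (max N₀ (max (NX v) (NY v))) (le_trans (le_max_left _ _) (le_max_right _ _))
    have h2 := hNY v (max N₀ (max (NX v) (NY v))) (le_trans (le_max_right _ _) (le_max_right _ _))
    have h3 := hF (max N₀ (max (NX v) (NY v))) (le_max_left _ _) v hvF
    rw [← h1, ← h2, h3]
  constructor
  · exact Set.Finite.subset F.finite_toSet hxy
  intro S p
  set T : Finset (Zd d) := Finset.image₂ (· + ·) (fms F S) S with hT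
  set N : ℕ := max N₀ (T.sup fun v => max (NX v) (NY v)) with hNdef
  have hXN : ∀ v ∈ T, X N v = x v := by
    intro v hv
    refine hNX v N ?_
    calc NX v ≤ max (NX v) (NY v) := le_max_left _ _
      _ ≤ T.sup fun v => max (NX v) (NY v) := Finset.le_sup (f := fun v => max (NX v) (NY v)) hv
      _ ≤ N := le_max_right _ _
  have hYN : ∀ v ∈ T, Y N v = y v := by
    intro v hv
    refine hNY v N ?_
    calc NY v ≤ max (NX v) (NY v) := le_max_right _ _
      _ ≤ T.sup fun v => max (NX v) (NY v) := Finset.le_sup (f := fun v => max (NX v) (NY v)) hv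
      _ ≤ N := le_max_right _ _
  have hXYN : {v | X N v ≠ Y N v} ⊆ ↑F := by
    intro v hv
    by_contra hvF
    exact hv (hF N (le_max_left _ _) v hvF)
  have hD : ∀ z w : Zd d → A, ({v | z v ≠ w v} ⊆ ↑F) →
      occs z S p \ occs w S p ⊆ ↑(fms F S) := by
    intro z w hzw m hm
    obtain ⟨hm1, hm2⟩ := hm
    simp only [occs, Set.mem_setOf_eq, not_forall] at hm2
    obtain ⟨s, hs, hws⟩ := hm2
    have hzs : z (m + s) = p s := hm1 s hs
    have hmsF : m + s ∈ F := hzw (show z (m + s) ≠ w (m + s) from fun h => hws (h.symm.trans hzs))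
    have : m = (m + s) - s := by ring
    rw [this]
    exact Finset.mem_coe.mpr (Finset.mem_image₂.mpr ⟨m + s, hmsF, s, hs, rfl⟩)
  have hmemT : ∀ m ∈ fms F S, ∀ s ∈ S, m + s ∈ T :=
    fun m hm s hs => Finset.mem_image₂.mpr ⟨m, hm, s, hs, rfl⟩
  have hkeyX : ∀ m ∈ fms F S, (m ∈ occs x S p ↔ m ∈ occs (X N) S p) := by
    intro m hm
    constructor <;> intro h s hs <;> have := h s hs
    · rw [hXN (m + s) (hmemT m hm s hs)]; exact this
    · rw [← hXN (m + s) (hmemT m hm s hs)]; exact this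
  have hkeyY : ∀ m ∈ fms F S, (m ∈ occs y S p ↔ m ∈ occs (Y N) S p) := by
    intro m hm
    constructor <;> intro h s hs <;> have := h s hs
    · rw [hYN (m + s) (hmemT m hm s hs)]; exact this
    · rw [← hYN (m + s) (hmemT m hm s hs)]; exact this
  have e1 : occs x S p \ occs y S p = occs (X N) S p \ occs (Y N) S p := by
    ext m
    constructor
    · intro hm
      have hmf : m ∈ fms F S := hD x y hxy hm
      exact ⟨(hkeyX m hmf).mp hm.1, fun h => hm.2 ((hkeyY m hmf).mpr h)⟩
    · intro hm
      have hmf : m ∈ fms F S := hD (X N) (Y N) hXYN hm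
      exact ⟨(hkeyX m hmf).mpr hm.1, fun h => hm.2 ((hkeyY m hmf).mp h)⟩
  have e2 : occs y S p \ occs x S p = occs (Y N) S p \ occs (X N) S p := by
    ext m
    constructor
    · intro hm
      have hmf : m ∈ fms F S := (hD y x (fun v hv => hxy (fun h => hv h.symm)) hm)
      exact ⟨(hkeyY m hmf).mp hm.1, fun h => hm.2 ((hkeyX m hmf).mpr h)⟩
    · intro hm
      have hmf : m ∈ fms F S := (hD (Y N) (X N) (fun v hv => hXYN (fun h => hv h.symm)) hm)
      exact ⟨(hkeyY m hmf).mpr hm.1, fun h => hm.2 ((hkeyX m hmf).mp h)⟩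
  rw [e1, e2]
  exact (hind N).2 S p
end

section
/- Let x, y ∈ Σ^{ℤ^d} be an indistinguishable asymptotic pair with x not recurrent (some pattern in the language of x has only finitely many occurrences in x). Then x and y lie in the same shift orbit: there exists v ∈ ℤ^d with σ^v(y) = x. -/
/-- If `(x, y)` is an indistinguishable asymptotic pair and `x` is not
recurrent (some pattern of its language has finitely many occurrences), then `x` and `y`
are in the same shift orbit. -/
theorem not_recurrent_same_orbit {d : ℕ} {A : Type*} (x y : Zd d → A)
    (h : Indistinguishable x y)
    (hrec : ∃ (S : Finset (Zd d)) (p : Zd d → A),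
      (occs x S p).Nonempty ∧ (occs x S p).Finite) :
    ∃ v : Zd d, ∀ u : Zd d, y (u + v) = x u := by
  classical
  obtain ⟨S, p, ⟨v0, hv0⟩, hfin⟩ := hrec
  obtain ⟨hD, hind⟩ := h
  set Sn : ℕ → Finset (Zd d) :=
    fun n => S ∪ Finset.Icc (fun _ => -(n : ℤ)) (fun _ => (n : ℤ)) with hSnDef
  set q : Zd d → A := fun s => x (v0 + s) with hqDef
  have hSsub : ∀ n, S ⊆ Sn n := fun n => Finset.subset_union_left
  have hqp : ∀ s ∈ S, q s = p s := fun s hs => hv0 s hs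
  have hocc_sub : ∀ (z : Zd d → A) (n : ℕ), occs z (Sn n) q ⊆ occs z S p := by
    intro z n m hm s hs
    rw [← hqp s hs]; exact hm s (hSsub n hs)
  -- `occs y S p` is finite
  have hyfin : (occs y S p).Finite := by
    have hsub : occs y S p ⊆
        occs x S p ∪ ⋃ s ∈ S, (fun m : Zd d => m + s) ⁻¹' {v | x v ≠ y v} := by
      intro m hm
      by_cases hx : m ∈ occs x S p
      · exact Or.inl hx
      · right
        simp only [occs, Set.mem_setOf_eq] at hx hm
        push_neg at hx
        obtain ⟨s, hs, hne⟩ := hx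
        refine Set.mem_biUnion hs ?_
        have : y (m + s) = p s := hm s hs
        simp only [Set.mem_preimage, Set.mem_setOf_eq, this]
        exact hne
    refine Set.Finite.subset (hfin.union ?_) hsub
    refine Set.Finite.biUnion S.finite_toSet (fun s _ => hD.preimage ?_)
    exact Function.Injective.injOn (add_left_injective s)
  -- each `occs y (Sn n) q` is nonempty and finite
  have hxn : ∀ n, v0 ∈ occs x (Sn n) q := fun n s _ => rfl
  have hxfinn : ∀ n, (occs x (Sn n) q).Finite := fun n => hfin.subset (hocc_sub x n)
  have hyfinn : ∀ n, (occs y (Sn n) q).Finite := fun n => hyfin.subset (hocc_sub y n)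
  have hyn : ∀ n, (occs y (Sn n) q).Nonempty := by
    intro n
    by_contra hempty
    rw [Set.not_nonempty_iff_eq_empty] at hempty
    have hcard := hind (Sn n) q
    rw [hempty] at hcard
    simp only [Set.diff_empty, Set.empty_diff, Set.ncard_empty] at hcard
    have hpos : 0 < (occs x (Sn n) q).ncard :=
      (Set.ncard_pos (hxfinn n)).mpr ⟨v0, hxn n⟩
    omega
  -- `occs y (Sn ·) q` is antitone
  have hanti : ∀ {n m : ℕ}, n ≤ m → occs y (Sn m) q ⊆ occs y (Sn n) q := by
    intro n m hnm w hw s hs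
    refine hw s ?_
    rcases Finset.mem_union.mp hs with hs | hs
    · exact Finset.mem_union_left _ hs
    · refine Finset.mem_union_right _ (Finset.Icc_subset_Icc ?_ ?_ hs)
      · intro i; simp; exact_mod_cast hnm
      · intro i; simp; exact_mod_cast hnm
  -- find a point in the intersection
  set f : ℕ → ℕ := fun n => (occs y (Sn n) q).ncard with hfDef
  have hrange : (Set.range f).Nonempty := ⟨f 0, ⟨0, rfl⟩⟩
  obtain ⟨N, hN⟩ := Nat.sInf_mem hrange
  have hmin : ∀ n, f N ≤ f n := by
    intro n; rw [hN]; exact Nat.sInf_le ⟨n, rfl⟩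
  have hstab : ∀ n, N ≤ n → occs y (Sn n) q = occs y (Sn N) q := by
    intro n hn
    exact Set.eq_of_subset_of_ncard_le (hanti hn) (hmin n) (hyfinn N)
  obtain ⟨w, hw⟩ := hyn N
  have hwall : ∀ n, w ∈ occs y (Sn n) q := by
    intro n
    rcases le_total n N with hle | hle
    · exact hanti hle hw
    · rw [hstab n hle]; exact hw
  -- conclude
  refine ⟨w - v0, fun u => ?_⟩
  set M : ℕ := (Finset.univ : Finset (Fin d)).sup (fun i => ((u - v0) i).natAbs) with hM
  have hmem : u - v0 ∈ Sn M := by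
    refine Finset.mem_union_right _ ?_
    rw [Finset.mem_Icc]
    have key : ∀ i, -(M : ℤ) ≤ (u - v0) i ∧ (u - v0) i ≤ (M : ℤ) := by
      intro i
      have h1 : ((u - v0) i).natAbs ≤ M :=
        Finset.le_sup (f := fun i => ((u - v0) i).natAbs) (Finset.mem_univ i)
      have h2 : |(u - v0) i| ≤ (M : ℤ) := by
        rw [Int.abs_eq_natAbs]; exact Int.ofNat_le.mpr h1
      exact abs_le.mp h2
    exact ⟨fun i => (key i).1, fun i => (key i).2⟩
  have := hwall M (u - v0) hmem
  have heq : u + (w - v0) = w + (u - v0) := by abel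
  have heq2 : v0 + (u - v0) = u := by abel
  rw [heq, this]
  simp only [hqDef, heq2]
end

section
/- Let x, y ∈ {0,1,…,d}^{ℤ^d} be an asymptotic pair satisfying the flip condition (indistinguishability not assumed). Then for every finite nonempty connected subset S ⊆ ℤ^d, #(ℒ_S(x) ∪ ℒ_S(y)) ≥ #(F − S), where F = {0, −e₁, …, −e_d}. -/
/- ### Auxiliary lemmas -/


lemma single_ne_zero' {d : ℕ} (i : Fin d) : (Pi.single i 1 : Zd d) ≠ 0 := by
  intro h
  have := congrFun h i
  simp [Pi.single_eq_same] at this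

lemma neg_single_inj {d : ℕ} : Function.Injective
    (fun i : Fin d => -(Pi.single i 1 : Zd d)) := by
  intro i j h
  simp only [neg_inj] at h
  by_contra hne
  have := congrFun h i
  rw [Pi.single_eq_same, Pi.single_eq_of_ne hne] at this
  exact one_ne_zero this

lemma flipF_card (d : ℕ) : (flipF d).card = d + 1 := by
  rw [flipF, Finset.card_insert_of_notMem, Finset.card_image_of_injective _ neg_single_inj,
    Finset.card_univ, Fintype.card_fin]
  intro h
  obtain ⟨i, -, hi⟩ := Finset.mem_image.mp h
  exact single_ne_zero' i (neg_eq_zero.mp hi)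

lemma zadj_symm {d : ℕ} : ∀ a b : Zd d, ZAdj a b → ZAdj b a := by
  rintro a b ⟨i, h | h⟩
  exacts [⟨i, Or.inr h⟩, ⟨i, Or.inl h⟩]

lemma zadj_irrefl {d : ℕ} (a : Zd d) : ¬ ZAdj a a := by
  rintro ⟨i, h | h⟩ <;> · rw [sub_self] at h; exact single_ne_zero' i h.symm

open Fin.NatCast in
lemma finlem {m : ℕ} (V : Finset (Fin (m+1))) (hV : V.Nonempty) (hcard : V.card ≤ m) :
    V.card + 1 ≤ (V ∪ V.image (· - 1)).card := by
  by_contra h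
  push_neg at h
  have heq : V = V ∪ V.image (· - 1) :=
    Finset.eq_of_subset_of_card_le Finset.subset_union_left (by omega)
  have hclosed : ∀ a ∈ V, a - 1 ∈ V := by
    intro a ha
    have : a - 1 ∈ V ∪ V.image (· - 1) :=
      Finset.mem_union_right _ (Finset.mem_image_of_mem _ ha)
    rwa [← heq] at this
  obtain ⟨a, ha⟩ := hV
  have hk : ∀ k : ℕ, a - (k : Fin (m+1)) ∈ V := by
    intro k
    induction k with
    | zero => simpa using ha
    | succ k ih =>
        have h2 := hclosed _ ih
        have : a - ((k:ℕ)+1 : ℕ) = a - (k : Fin (m+1)) - 1 := by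
          push_cast
          rw [sub_sub]
        rwa [this]
  have hall : ∀ b : Fin (m+1), b ∈ V := by
    intro b
    have := hk ((a - b).val)
    rwa [Fin.cast_val_eq_self, sub_sub_cancel] at this
  have : V = Finset.univ := Finset.eq_univ_iff_forall.mpr hall
  rw [this, Finset.card_univ, Fintype.card_fin] at hcard
  omega


lemma exists_noncut {V : Type*} [DecidableEq V] (r : V → V → Prop)
    (hsymm : ∀ a b, r a b → r b a) (hirr : ∀ a, ¬ r a a)
    (S : Finset V) (h2 : 2 ≤ S.card)
    (hconn : ∀ u ∈ S, ∀ v ∈ S,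
      Relation.ReflTransGen (fun a b => r a b ∧ a ∈ S ∧ b ∈ S) u v) :
    ∃ u ∈ S, (∃ w ∈ S.erase u, r u w) ∧ (S.erase u).Nonempty ∧
      ∀ a ∈ S.erase u, ∀ b ∈ S.erase u,
        Relation.ReflTransGen (fun a b => r a b ∧ a ∈ S.erase u ∧ b ∈ S.erase u) a b := by
  classical
  have hS : S.Nonempty := Finset.card_pos.mp (by omega)
  obtain ⟨r0, hr0⟩ := hS
  set rS : V → V → Prop := fun a b => r a b ∧ a ∈ S ∧ b ∈ S with hrS
  -- length-indexed reachability from r0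
  let Reach : ℕ → V → Prop := fun n =>
    Nat.rec (fun v => v = r0) (fun _ ih v => ∃ w, ih w ∧ rS w v) n
  have hreach : ∀ v, Relation.ReflTransGen rS r0 v → ∃ n, Reach n v := by
    intro v h
    induction h with
    | refl => exact ⟨0, rfl⟩
    | tail _ hbc ih =>
        obtain ⟨n, hn⟩ := ih
        exact ⟨n + 1, _, hn, hbc⟩
  have hne : ∀ v ∈ S, {n | Reach n v}.Nonempty := fun v hv =>
    hreach v (hconn r0 hr0 v hv)
  set D : V → ℕ := fun v => sInf {n | Reach n v} with hD
  have hmem : ∀ v ∈ S, Reach (D v) v := fun v hv => Nat.sInf_mem (hne v hv)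
  have hDle : ∀ v n, Reach n v → D v ≤ n := fun v n h => Nat.sInf_le h
  obtain ⟨u, huS, humax⟩ := Finset.exists_max_image S D ⟨r0, hr0⟩
  have hDr0 : D r0 = 0 := Nat.le_zero.mp (hDle r0 0 rfl)
  obtain ⟨v1, hv1S, hv1ne⟩ := Finset.exists_mem_ne (s := S) (by omega) r0
  have hDv1 : 1 ≤ D v1 := by
    rcases Nat.eq_zero_or_pos (D v1) with h | h
    · have h0 : Reach 0 v1 := by rw [← h]; exact hmem v1 hv1S
      exact absurd h0 hv1ne
    · exact h
  have huner0 : u ≠ r0 := by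
    intro h
    have := humax v1 hv1S
    rw [h, hDr0] at this
    omega
  set rS' : V → V → Prop := fun a b => r a b ∧ a ∈ S.erase u ∧ b ∈ S.erase u with hrS'
  -- every v ≠ u reachable from r0 avoiding u
  have key : ∀ n, ∀ v ∈ S, v ≠ u → D v ≤ n → Relation.ReflTransGen rS' r0 v := by
    intro n
    induction n with
    | zero =>
        intro v hv hvne hle
        have h0 : D v = 0 := Nat.le_zero.mp hle
        have : Reach 0 v := h0 ▸ hmem v hv
        rw [show v = r0 from this]
    | succ n ih =>
        intro v hv hvne hle
        rcases Nat.eq_zero_or_eq_succ_pred (D v) with h0 | hs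
        · have : Reach 0 v := h0 ▸ hmem v hv
          rw [show v = r0 from this]
        · have hm := hmem v hv
          rw [hs] at hm
          obtain ⟨w, hw, hrwv⟩ := hm
          have hDw : D w ≤ D v - 1 := hDle w _ hw
          have hwS : w ∈ S := hrwv.2.1
          have hwne : w ≠ u := by
            intro h
            have h1 := humax v hv
            rw [← h] at h1
            omega
          have hrec := ih w hwS hwne (by omega)
          exact hrec.tail ⟨hrwv.1, Finset.mem_erase.mpr ⟨hwne, hwS⟩,
            Finset.mem_erase.mpr ⟨hvne, hv⟩⟩
  refine ⟨u, huS, ?_, ⟨r0, Finset.mem_erase.mpr ⟨huner0.symm, hr0⟩⟩, ?_⟩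
  · -- neighbour of u in S.erase u
    have h := hconn u huS r0 hr0
    rcases h.cases_head with h | ⟨b, ⟨hrb, _, hbS⟩, _⟩
    · exact absurd h huner0
    · have hbne : b ≠ u := fun h => hirr u (h ▸ hrb)
      exact ⟨b, Finset.mem_erase.mpr ⟨hbne, hbS⟩, hrb⟩
  · intro a ha b hb
    have hsymm' : Symmetric rS' := fun p q ⟨h1, h2, h3⟩ => ⟨hsymm _ _ h1, h3, h2⟩
    have h1 : Relation.ReflTransGen rS' r0 a :=
      key (D a) a (Finset.mem_of_mem_erase ha) (Finset.ne_of_mem_erase ha) le_rfl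
    have h2 : Relation.ReflTransGen rS' r0 b :=
      key (D b) b (Finset.mem_of_mem_erase hb) (Finset.ne_of_mem_erase hb) le_rfl
    haveI : Std.Symm rS' := ⟨fun _ _ h => hsymm' h⟩
    have h1' : Relation.ReflTransGen rS' a r0 := Std.Symm.symm _ _ h1
    exact h1'.trans h2

lemma base_case {d : ℕ} (x y : Zd d → Fin (d + 1)) (hflip : FlipCondition x y)
    (s : Zd d) :
    (fms (flipF d) {s}).card ≤ (langOn x {s} ∪ langOn y {s}).ncard := by
  classical
  have hsurj := hflip.2.1.2.2
  have hL : (fms (flipF d) {s}).card = d + 1 := by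
    rw [fms, Finset.image₂_singleton_right,
      Finset.card_image_of_injective _ (sub_left_injective), flipF_card]
  set e : Fin (d + 1) → (({s} : Finset (Zd d)) → Fin (d + 1)) := fun a _ => a with he
  have hrange : Set.range e ⊆ langOn x {s} ∪ langOn y {s} := by
    rintro q ⟨a, rfl⟩
    obtain ⟨f, hf, hxf⟩ := hsurj (Set.mem_univ a)
    refine Or.inl ⟨f - s, fun t => ?_⟩
    have hts : (t : Zd d) = s := Finset.mem_singleton.mp t.2
    rw [hts, sub_add_cancel, hxf]
  have hinj : Function.Injective e := by
    intro a b h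
    exact congrFun h ⟨s, Finset.mem_singleton_self s⟩
  have h1 : (Set.range e).ncard = d + 1 := by
    rw [← Set.image_univ, Set.ncard_image_of_injective _ hinj, Set.ncard_univ,
      Nat.card_eq_fintype_card, Fintype.card_fin]
  rw [hL]
  exact le_trans (le_of_eq h1.symm) (Set.ncard_le_ncard hrange (Set.toFinite _))

lemma step_case {d : ℕ} (x y : Zd d → Fin (d + 1)) (hflip : FlipCondition x y)
    (S : Finset (Zd d)) (h2 : 2 ≤ S.card)
    (u : Zd d) (huS : u ∈ S) (s' : Zd d) (hs'mem : s' ∈ S.erase u) (hadj : ZAdj u s')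
    (hIH : (fms (flipF d) (S.erase u)).card ≤
      (langOn x (S.erase u) ∪ langOn y (S.erase u)).ncard) :
    (fms (flipF d) S).card ≤ (langOn x S ∪ langOn y S).ncard := by
  classical
  obtain ⟨hdiff, hbij, hx0, hy⟩ := hflip
  have hxy_off : ∀ v, v ∉ flipF d → x v = y v := by
    intro v hv
    by_contra h
    exact hv (by rw [← Finset.mem_coe, ← hdiff]; exact h)
  set F := flipF d with hF
  set S' := S.erase u with hS'
  set A : Set (↥S → Fin (d + 1)) := langOn x S ∪ langOn y S with hA
  set B : Set (↥S' → Fin (d + 1)) := langOn x S' ∪ langOn y S' with hB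
  set res : (↥S → Fin (d + 1)) → (↥S' → Fin (d + 1)) :=
    fun p t => p ⟨t.1, Finset.mem_of_mem_erase t.2⟩ with hres
  have hresAB : ∀ p ∈ A, res p ∈ B := by
    rintro p (⟨n, hn⟩ | ⟨n, hn⟩)
    · exact Or.inl ⟨n, fun t => hn ⟨t.1, Finset.mem_of_mem_erase t.2⟩⟩
    · exact Or.inr ⟨n, fun t => hn ⟨t.1, Finset.mem_of_mem_erase t.2⟩⟩
  set patx : Zd d → (↥S → Fin (d + 1)) := fun n t => x (n + t) with hpatx
  set paty : Zd d → (↥S → Fin (d + 1)) := fun n t => y (n + t) with hpaty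
  set qpat : Zd d → (↥S' → Fin (d + 1)) := fun n t => x (n + t) with hqpat
  have hpatxA : ∀ n, patx n ∈ A := fun n => Or.inl ⟨n, fun t => rfl⟩
  have hpatyA : ∀ n, paty n ∈ A := fun n => Or.inr ⟨n, fun t => rfl⟩
  set Δ : Finset (Zd d) := fms F S \ fms F S' with hΔ
  have hsub : fms F S' ⊆ fms F S := Finset.image₂_subset_left (Finset.erase_subset u S)
  have hcardsplit : (fms F S).card = Δ.card + (fms F S').card := by
    have h := Finset.card_sdiff_add_card (fms F S) (fms F S')
    rwa [Finset.union_eq_left.mpr hsub, eq_comm] at h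
  have hP1 : ∀ n ∈ Δ, n + u ∈ F := by
    intro n hn
    obtain ⟨h1, h2⟩ := Finset.mem_sdiff.mp hn
    obtain ⟨f, hf, s, hs, hfs⟩ := Finset.mem_image₂.mp h1
    have hsu : s = u := by
      by_contra hne
      refine h2 ?_
      rw [← hfs]
      simp only [hΔ, hS', fms]
      exact Finset.mem_image₂_of_mem hf (Finset.mem_erase.mpr ⟨hne, hs⟩)
    rw [← hfs, hsu]
    simpa using hf
  have hP2 : ∀ n ∈ Δ, ∀ s ∈ S', n + s ∉ F := by
    intro n hn s hs hmem
    obtain ⟨h1, h2⟩ := Finset.mem_sdiff.mp hn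
    refine h2 (Finset.mem_image₂.mpr ⟨n + s, hmem, s, hs, by ring⟩)
  have hP3 : Δ.card ≤ d := by
    obtain ⟨i, hcase | hcase⟩ := hadj
    case' inl => set f' : Zd d := -(Pi.single i 1) with hf'
    case' inr => set f' : Zd d := 0 with hf'
    case inl =>
      have hf'F : f' ∈ F := Finset.mem_insert_of_mem (Finset.mem_image_of_mem _ (Finset.mem_univ i))
      have hn0 : f' - u ∉ Δ := by
        intro hmem
        refine hP2 _ hmem s' hs'mem ?_
        have : f' - u + s' = 0 := by rw [hf', ← hcase]; ring
        rw [this]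
        exact Finset.mem_insert_self _ _
      have hΔsub : Δ ⊆ (F.image (· - u)).erase (f' - u) := by
        intro n hn
        refine Finset.mem_erase.mpr ⟨fun h => hn0 (h ▸ hn), ?_⟩
        exact Finset.mem_image.mpr ⟨n + u, hP1 n hn, by ring⟩
      calc Δ.card ≤ ((F.image (· - u)).erase (f' - u)).card := Finset.card_le_card hΔsub
        _ = (F.image (· - u)).card - 1 :=
            Finset.card_erase_of_mem (Finset.mem_image_of_mem _ hf'F)
        _ ≤ d := by
            rw [Finset.card_image_of_injective _ (sub_left_injective), flipF_card]
            omega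
    case inr =>
      have hf'F : f' ∈ F := Finset.mem_insert_self _ _
      have hn0 : f' - u ∉ Δ := by
        intro hmem
        refine hP2 _ hmem s' hs'mem ?_
        have : f' - u + s' = -(Pi.single i 1) := by rw [hf', ← hcase]; ring
        rw [this]
        exact Finset.mem_insert_of_mem (Finset.mem_image_of_mem _ (Finset.mem_univ i))
      have hΔsub : Δ ⊆ (F.image (· - u)).erase (f' - u) := by
        intro n hn
        refine Finset.mem_erase.mpr ⟨fun h => hn0 (h ▸ hn), ?_⟩
        exact Finset.mem_image.mpr ⟨n + u, hP1 n hn, by ring⟩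
      calc Δ.card ≤ ((F.image (· - u)).erase (f' - u)).card := Finset.card_le_card hΔsub
        _ = (F.image (· - u)).card - 1 :=
            Finset.card_erase_of_mem (Finset.mem_image_of_mem _ hf'F)
        _ ≤ d := by
            rw [Finset.card_image_of_injective _ (sub_left_injective), flipF_card]
            omega
  have hP4 : Set.InjOn (fun n => x (n + u)) Δ := by
    intro n hn n' hn' h
    have h1 := hbij.2.1 (Finset.mem_coe.mpr (hP1 n hn)) (Finset.mem_coe.mpr (hP1 n' hn')) h
    exact add_right_cancel h1
  -- finset versions
  have hAfin : A.Finite := Set.toFinite A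
  have hBfin : B.Finite := Set.toFinite B
  set FA := hAfin.toFinset with hFA
  set FB := hBfin.toFinset with hFB
  have hmemFA : ∀ p, p ∈ FA ↔ p ∈ A := fun p => Set.Finite.mem_toFinset _
  have hmemFB : ∀ q, q ∈ FB ↔ q ∈ B := fun q => Set.Finite.mem_toFinset _
  have hsum : FA.card = ∑ b ∈ FB, (FA.filter (fun p => res p = b)).card :=
    Finset.card_eq_sum_card_fiberwise
      (fun p hp => (hmemFB _).mpr (hresAB p ((hmemFA p).mp hp)))
  have hΔsum : Δ.card = ∑ b ∈ FB, (Δ.filter (fun n => qpat n = b)).card :=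
    Finset.card_eq_sum_card_fiberwise
      (fun n _ => (hmemFB _).mpr (Or.inl ⟨n, fun t => rfl⟩))
  -- per-fiber bound
  have hfiber : ∀ b ∈ FB, 1 + (Δ.filter (fun n => qpat n = b)).card ≤
      (FA.filter (fun p => res p = b)).card := by
    intro b hb
    set C := Δ.filter (fun n => qpat n = b) with hC
    set fib := FA.filter (fun p => res p = b) with hfib
    have hqb : ∀ n ∈ C, qpat n = b := fun n hn => (Finset.mem_filter.mp hn).2
    have hCΔ : C ⊆ Δ := Finset.filter_subset _ _
    rcases C.eq_empty_or_nonempty with hCe | hCne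
    · -- fiber nonempty by surjectivity of res onto B
      rw [hCe]
      simp only [Finset.card_empty, add_zero]
      rw [Nat.succ_le_iff, Finset.card_pos]
      rcases (hmemFB b).mp hb with ⟨n, hn⟩ | ⟨n, hn⟩
      · refine ⟨patx n, Finset.mem_filter.mpr ⟨(hmemFA _).mpr (hpatxA n), ?_⟩⟩
        funext t
        exact hn t
      · refine ⟨paty n, Finset.mem_filter.mpr ⟨(hmemFA _).mpr (hpatyA n), ?_⟩⟩
        funext t
        exact hn t
    · -- value-at-u map is injective on the fiber
      have hval : Set.InjOn (fun p : ↥S → Fin (d + 1) => p ⟨u, huS⟩) ↑fib := by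
        intro p hp p' hp' h
        have hbp : res p = b := (Finset.mem_filter.mp hp).2
        have hbp' : res p' = b := (Finset.mem_filter.mp hp').2
        funext t
        rcases eq_or_ne (t : Zd d) u with htu | htu
        · have : t = (⟨u, huS⟩ : ↥S) := Subtype.ext htu
          rw [this]; exact h
        · have htS' : (t : Zd d) ∈ S' := Finset.mem_erase.mpr ⟨htu, t.2⟩
          have h1 := congrFun hbp ⟨t, htS'⟩
          have h2 := congrFun hbp' ⟨t, htS'⟩
          rw [hres] at h1 h2
          simp only at h1 h2
          rw [show (⟨(t : Zd d), Finset.mem_of_mem_erase htS'⟩ : ↥S) = t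
            from Subtype.ext rfl] at h1 h2
          rw [h1, h2]
      set VV := C.image (fun n => x (n + u)) with hVV
      have hVWsub : VV ∪ VV.image (· - 1) ⊆ fib.image (fun p => p ⟨u, huS⟩) := by
        intro a ha
        rcases Finset.mem_union.mp ha with ha | ha
        · obtain ⟨n, hnC, rfl⟩ := Finset.mem_image.mp ha
          refine Finset.mem_image.mpr ⟨patx n, Finset.mem_filter.mpr
            ⟨(hmemFA _).mpr (hpatxA n), ?_⟩, rfl⟩
          exact hqb n hnC
        · obtain ⟨a', ha', rfl⟩ := Finset.mem_image.mp ha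
          obtain ⟨n, hnC, rfl⟩ := Finset.mem_image.mp ha'
          have hnΔ : n ∈ Δ := hCΔ hnC
          refine Finset.mem_image.mpr ⟨paty n, Finset.mem_filter.mpr
            ⟨(hmemFA _).mpr (hpatyA n), ?_⟩, ?_⟩
          · -- res (paty n) = b
            rw [← hqb n hnC]
            funext t
            rw [hres, hpaty, hqpat]
            simp only
            exact (hxy_off _ (hP2 n hnΔ t t.2)).symm
          · -- value at u is x (n+u) - 1
            rw [hpaty]
            simp only
            exact hy _ (hP1 n hnΔ)
      have hVVcard : VV.card = C.card :=
        Finset.card_image_of_injOn (hP4.mono (fun n hn => hCΔ hn))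
      have hVVne : VV.Nonempty := hCne.image _
      have hVVle : VV.card ≤ d := by
        rw [hVVcard]
        exact le_trans (Finset.card_le_card hCΔ) hP3
      have hfin := finlem VV hVVne hVVle
      calc 1 + C.card = VV.card + 1 := by omega
        _ ≤ (VV ∪ VV.image (· - 1)).card := hfin
        _ ≤ (fib.image (fun p => p ⟨u, huS⟩)).card := Finset.card_le_card hVWsub
        _ ≤ fib.card := Finset.card_image_le
  -- put everything together
  have hsumle : ∑ b ∈ FB, (1 + (Δ.filter (fun n => qpat n = b)).card) ≤
      ∑ b ∈ FB, (FA.filter (fun p => res p = b)).card :=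
    Finset.sum_le_sum hfiber
  rw [Finset.sum_add_distrib, Finset.sum_const, smul_eq_mul, mul_one, ← hΔsum, ← hsum] at hsumle
  have hncardA : A.ncard = FA.card := Set.ncard_eq_toFinset_card _ hAfin
  have hncardB : B.ncard = FB.card := Set.ncard_eq_toFinset_card _ hBfin
  rw [hA] at hncardA
  rw [hB] at hncardB
  rw [hncardA]
  rw [hncardB] at hIH
  omega

lemma main_ind {d : ℕ} (x y : Zd d → Fin (d + 1)) (hflip : FlipCondition x y) :
    ∀ (N : ℕ) (S : Finset (Zd d)), S.card ≤ N → S.Nonempty → FinsetConnected S →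
      (fms (flipF d) S).card ≤ (langOn x S ∪ langOn y S).ncard := by
  intro N
  induction N with
  | zero =>
      intro S hcard hne _
      have := Finset.card_pos.mpr hne
      omega
  | succ N ih =>
      intro S hcard hne hconn
      rcases eq_or_lt_of_le (Nat.succ_le_of_lt (Finset.card_pos.mpr hne)) with h1 | h2
      · obtain ⟨s, rfl⟩ := Finset.card_eq_one.mp h1.symm
        exact base_case x y hflip s
      · obtain ⟨u, huS, ⟨s', hs'mem, hadj⟩, hS'ne, hconn'⟩ :=
          exists_noncut ZAdj zadj_symm zadj_irrefl S h2 hconn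
        have hIH := ih (S.erase u)
          (by rw [Finset.card_erase_of_mem huS]; omega) hS'ne hconn'
        exact step_case x y hflip S h2 u huS s' hs'mem hadj hIH

/-- For an asymptotic pair satisfying the flip condition (no
indistinguishability assumed) and every finite nonempty connected `S ⊆ ℤ^d`,
`#(ℒ_S(x) ∪ ℒ_S(y)) ≥ #(F - S)`. -/
theorem complexity_lower_bound {d : ℕ} (x y : Zd d → Fin (d + 1))
    (hflip : FlipCondition x y)
    (S : Finset (Zd d)) (hS : S.Nonempty) (hconn : FinsetConnected S) :
    (fms (flipF d) S).card ≤ (langOn x S ∪ langOn y S).ncard :=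
  main_ind x y hflip S.card S le_rfl hS hconn
end

section
/- Let x, y ∈ {0,1,…,d}^{ℤ^d} be an indistinguishable asymptotic pair satisfying the flip condition. Then for every finite nonempty connected S ⊆ ℤ^d, the maps n ↦ σⁿ(x)|_S and n ↦ σⁿ(y)|_S are two distinct bijections from F − S onto ℒ_S(x) = ℒ_S(y). -/
open Fin.NatCast Fin.CommRing

namespace TDB

open Finset

variable {d : ℕ}

theorem zero_mem_flipF : (0 : Zd d) ∈ flipF d := Finset.mem_insert_self _ _

theorem neg_single_mem_flipF (i : Fin d) : -(Pi.single i 1 : Zd d) ∈ flipF d :=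
  Finset.mem_insert_of_mem (Finset.mem_image.2 ⟨i, Finset.mem_univ i, rfl⟩)

theorem mem_flipF {v : Zd d} : v ∈ flipF d ↔ v = 0 ∨ ∃ i, v = -(Pi.single i 1 : Zd d) := by
  simp [flipF, eq_comm]

theorem single_ne_zero' (i : Fin d) : (Pi.single i 1 : Zd d) ≠ 0 := by
  intro h
  have := congrFun h i
  simp at this

theorem card_flipF : (flipF d).card = d + 1 := by
  have hinj : Function.Injective fun i : Fin d => -(Pi.single i 1 : Zd d) := by
    intro i j hij
    by_contra hne
    have := congrFun hij i
    simp [Pi.single_apply, hne] at this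
  rw [flipF, Finset.card_insert_of_notMem, Finset.card_image_of_injective _ hinj,
    Finset.card_univ, Fintype.card_fin]
  intro h
  obtain ⟨i, -, hi⟩ := Finset.mem_image.1 h
  exact single_ne_zero' i (by rwa [neg_eq_zero] at hi)

theorem mem_fms {F S : Finset (Zd d)} {n : Zd d} :
    n ∈ fms F S ↔ ∃ s ∈ S, n + s ∈ F := by
  constructor
  · rintro h
    obtain ⟨f, hf, s, hs, rfl⟩ := Finset.mem_image₂.1 h
    exact ⟨s, hs, by simpa using hf⟩
  · rintro ⟨s, hs, hf⟩
    exact Finset.mem_image₂.2 ⟨n + s, hf, s, hs, by abel⟩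

theorem fms_mono {F S S' : Finset (Zd d)} (h : S' ⊆ S) : fms F S' ⊆ fms F S := by
  intro n hn
  obtain ⟨s, hs, hf⟩ := mem_fms.1 hn
  exact mem_fms.2 ⟨s, h hs, hf⟩

theorem fms_insert {F S : Finset (Zd d)} {s : Zd d} :
    fms F (insert s S) = fms F {s} ∪ fms F S := by
  ext n
  simp only [Finset.mem_union, mem_fms, Finset.mem_insert, Finset.mem_singleton]
  constructor
  · rintro ⟨t, (rfl | ht), h⟩
    · exact Or.inl ⟨t, rfl, h⟩
    · exact Or.inr ⟨t, ht, h⟩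
  · rintro (⟨t, rfl, h⟩ | ⟨t, ht, h⟩)
    · exact ⟨t, Or.inl rfl, h⟩
    · exact ⟨t, Or.inr ht, h⟩

theorem mem_fms_singleton {F : Finset (Zd d)} {s n : Zd d} :
    n ∈ fms F {s} ↔ n + s ∈ F := by
  simp [mem_fms]

end TDB
namespace TDB2

open TDB

variable {d : ℕ} {A B : Zd d → Fin (d + 1)}

theorem occs_diff_subset (hne : ∀ v, A v ≠ B v → v ∈ flipF d)
    (S : Finset (Zd d)) (p : Zd d → Fin (d + 1)) :
    occs A S p \ occs B S p ⊆ ↑(fms (flipF d) S) := by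
  rintro n ⟨hA, hB⟩
  by_contra hn
  apply hB
  intro t ht
  rw [← hA t ht]
  by_contra hne'
  exact hn (Finset.mem_coe.2 (mem_fms.2 ⟨t, ht, hne (n + t) (Ne.symm hne')⟩))

theorem balance_nonempty (hne : ∀ v, A v ≠ B v ↔ v ∈ flipF d)
    (hcnt : ∀ S p, (occs A S p \ occs B S p).ncard = (occs B S p \ occs A S p).ncard)
    {S : Finset (Zd d)} {p : Zd d → Fin (d + 1)}
    (h : (occs A S p).Nonempty) : (occs B S p).Nonempty := by
  by_contra hB
  rw [Set.not_nonempty_iff_eq_empty] at hB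
  have h1 : occs B S p \ occs A S p = ∅ := by rw [hB]; simp
  have h2 := hcnt S p
  rw [h1, Set.ncard_empty] at h2
  have hfin : (occs A S p \ occs B S p).Finite :=
    Set.Finite.subset (Finset.finite_toSet _) (occs_diff_subset (fun v hv => (hne v).1 hv) S p)
  have h3 := (Set.ncard_eq_zero hfin).1 h2
  rw [hB, Set.diff_empty] at h3
  exact h.ne_empty h3

theorem fin_cycle {r : Fin (d + 1) → Prop} (hstep : ∀ k, r k ↔ r (k + 1)) {k₀ : Fin (d + 1)}
    (h0 : r k₀) : ∀ k, r k := by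
  have hj : ∀ j : ℕ, r (k₀ + (j : Fin (d + 1))) := by
    intro j
    induction j with
    | zero => simpa using h0
    | succ n ih =>
      have := (hstep (k₀ + (n : Fin (d + 1)))).1 ih
      have harr : k₀ + ((n : Fin (d+1)) + 1) = k₀ + (n : Fin (d+1)) + 1 := by ring
      rw [Nat.cast_add, Nat.cast_one, harr]
      exact this
  intro k
  have := hj (k - k₀).val
  rwa [Fin.cast_val_eq_self, show k₀ + (k - k₀) = k by ring] at this

open scoped Classical in
theorem ncard_inter_singleton {γ : Type*} (O : Set γ) (a : γ) :
    (O ∩ {a}).ncard = if a ∈ O then 1 else 0 := by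
  by_cases h : a ∈ O
  · rw [if_pos h, show O ∩ {a} = {a} from Set.inter_eq_self_of_subset_right (by simpa using h)]
    exact Set.ncard_singleton a
  · rw [if_neg h, show O ∩ {a} = ∅ by rw [Set.inter_singleton_eq_empty]; exact h]
    exact Set.ncard_empty _

theorem occ_in_window
    (hne : ∀ v, A v ≠ B v ↔ v ∈ flipF d)
    (hcnt : ∀ S p, (occs A S p \ occs B S p).ncard = (occs B S p \ occs A S p).ncard)
    (inv : Fin (d + 1) → Zd d)
    (hinv1 : ∀ k, inv k ∈ flipF d) (hinv2 : ∀ k, A (inv k) = k)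
    (hinv3 : ∀ f ∈ flipF d, inv (A f) = f)
    (σ : Fin (d + 1)) (hσ : ∀ f ∈ flipF d, B f = A f - σ)
    (hgen1 : ∀ r : Fin (d + 1) → Prop, (∀ k, r k ↔ r (k + σ)) → ∀ k₀, r k₀ → ∀ k, r k)
    {S : Finset (Zd d)} (hS : S.Nonempty) {p : Zd d → Fin (d + 1)}
    (hocc : (occs A S p).Nonempty) :
    ∃ n ∈ fms (flipF d) S, n ∈ occs A S p := by
  classical
  by_contra hcon
  push_neg at hcon
  have hσ0 : σ ≠ 0 := by
    intro h
    have h1 := hσ 0 zero_mem_flipF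
    rw [h, sub_zero] at h1
    exact (hne 0).2 zero_mem_flipF h1.symm
  set O := occs A S p with hO
  have hOW : ∀ n ∈ O, n ∉ fms (flipF d) S := fun n hn hw => hcon n hw hn
  -- occs A = occs B
  have hempty : occs A S p \ occs B S p = ∅ := by
    rw [Set.eq_empty_iff_forall_notMem]
    intro n hn
    exact hOW n hn.1 (occs_diff_subset (fun v hv => (hne v).1 hv) S p hn)
  have hBA : occs B S p \ occs A S p = ∅ := by
    have h2 := hcnt S p
    rw [hempty, Set.ncard_empty] at h2
    exact (Set.ncard_eq_zero (Set.Finite.subset (Finset.finite_toSet _)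
      (occs_diff_subset (fun v hv => (hne v).1 (Ne.symm hv)) S p))).1 h2.symm
  have hOB : occs B S p = O := by
    rw [hO]
    exact Set.Subset.antisymm (Set.diff_eq_empty.1 hBA) (Set.diff_eq_empty.1 hempty)
  -- closure
  have hclosure : ∀ n₀ ∈ O, ∀ f ∈ flipF d, ∀ f₀ ∈ flipF d, n₀ + f - f₀ ∈ O := by
    intro n₀ hn₀ f hf f₀ hf₀
    set g := f₀ - n₀ with hg
    have hgS : g ∉ S := by
      intro hgS
      exact hOW n₀ hn₀ (mem_fms.2 ⟨g, hgS, by rw [hg, show n₀ + (f₀ - n₀) = f₀ by ring]; exact hf₀⟩)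
    have hkeyA : ∀ k : Fin (d + 1),
        occs A (insert g S) (Function.update p g k) = O ∩ {n | A (n + g) = k} := by
      intro k
      ext n
      simp only [occs, Set.mem_setOf_eq, Finset.mem_insert, Set.mem_inter_iff, hO]
      constructor
      · intro h
        refine ⟨fun t ht => ?_, ?_⟩
        · have := h t (Or.inr ht)
          rwa [Function.update_of_ne (by rintro rfl; exact hgS ht)] at this
        · have := h g (Or.inl rfl)
          rwa [Function.update_self] at this
      · rintro ⟨h1, h2⟩ t (rfl | ht)
        · rwa [Function.update_self]
        · rw [Function.update_of_ne (by rintro rfl; exact hgS ht)]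
          exact h1 t ht
    have hkeyB : ∀ k : Fin (d + 1),
        occs B (insert g S) (Function.update p g k) = O ∩ {n | B (n + g) = k} := by
      intro k
      ext n
      simp only [occs, Set.mem_setOf_eq, Finset.mem_insert, Set.mem_inter_iff]
      rw [← hOB]
      simp only [occs, Set.mem_setOf_eq]
      constructor
      · intro h
        refine ⟨fun t ht => ?_, ?_⟩
        · have := h t (Or.inr ht)
          rwa [Function.update_of_ne (by rintro rfl; exact hgS ht)] at this
        · have := h g (Or.inl rfl)
          rwa [Function.update_self] at this
      · rintro ⟨h1, h2⟩ t (rfl | ht)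
        · rwa [Function.update_self]
        · rw [Function.update_of_ne (by rintro rfl; exact hgS ht)]
          exact h1 t ht
    have hdA : ∀ k : Fin (d + 1),
        occs A (insert g S) (Function.update p g k) \ occs B (insert g S) (Function.update p g k)
          = O ∩ {inv k - g} := by
      intro k
      rw [hkeyA, hkeyB]
      ext n
      simp only [Set.mem_diff, Set.mem_inter_iff, Set.mem_setOf_eq, Set.mem_singleton_iff]
      constructor
      · rintro ⟨⟨hOn, hAn⟩, hBn⟩
        refine ⟨hOn, ?_⟩
        have hBne : B (n + g) ≠ k := fun hb => hBn ⟨hOn, hb⟩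
        have hFg : n + g ∈ flipF d := (hne (n + g)).1 (by rw [hAn]; exact fun hh => hBne hh.symm)
        have h5 := hinv3 (n + g) hFg
        rw [hAn] at h5
        rw [h5]; ring
      · rintro ⟨hOn, rfl⟩
        have hFg : inv k - g + g ∈ flipF d := by
          rw [show inv k - g + g = inv k by ring]
          exact hinv1 k
        have hA2 : A (inv k - g + g) = k := by
          rw [show inv k - g + g = inv k by ring]
          exact hinv2 k
        refine ⟨⟨hOn, hA2⟩, ?_⟩
        rintro ⟨-, hB2⟩
        exact (hne _).2 hFg (hA2.trans hB2.symm)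
    have hdB : ∀ k : Fin (d + 1),
        occs B (insert g S) (Function.update p g k) \ occs A (insert g S) (Function.update p g k)
          = O ∩ {inv (k + σ) - g} := by
      intro k
      rw [hkeyA, hkeyB]
      ext n
      simp only [Set.mem_diff, Set.mem_inter_iff, Set.mem_setOf_eq, Set.mem_singleton_iff]
      constructor
      · rintro ⟨⟨hOn, hBn⟩, hAn⟩
        refine ⟨hOn, ?_⟩
        have hAne : A (n + g) ≠ k := fun ha => hAn ⟨hOn, ha⟩
        have hFg : n + g ∈ flipF d := (hne (n + g)).1 (by rw [hBn]; exact hAne)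
        have h4 : A (n + g) - σ = k := by rw [← hσ (n + g) hFg, hBn]
        have hA2 : A (n + g) = k + σ := sub_eq_iff_eq_add.1 h4
        have h5 := hinv3 (n + g) hFg
        rw [hA2] at h5
        rw [h5]; ring
      · rintro ⟨hOn, rfl⟩
        have harr : inv (k + σ) - g + g = inv (k + σ) := by ring
        have hFg : inv (k + σ) - g + g ∈ flipF d := by rw [harr]; exact hinv1 _
        have hA2 : A (inv (k + σ) - g + g) = k + σ := by rw [harr]; exact hinv2 _
        have hB2 : B (inv (k + σ) - g + g) = k := by
          rw [hσ _ hFg, hA2]; ring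
        refine ⟨⟨hOn, hB2⟩, ?_⟩
        rintro ⟨-, hA3⟩
        rw [hA2] at hA3
        exact hσ0 (left_eq_add.1 hA3.symm)
    have hr : ∀ k : Fin (d + 1), ((inv k - g ∈ O) ↔ (inv (k + σ) - g ∈ O)) := by
      intro k
      have hc := hcnt (insert g S) (Function.update p g k)
      rw [hdA, hdB, ncard_inter_singleton, ncard_inter_singleton] at hc
      by_cases h1 : inv k - g ∈ O <;> by_cases h2 : inv (k + σ) - g ∈ O
      · exact iff_of_true h1 h2
      · rw [if_pos h1, if_neg h2] at hc; omega
      · rw [if_neg h1, if_pos h2] at hc; omega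
      · exact iff_of_false h1 h2
    have hrk₀ : inv (A f₀) - g ∈ O := by
      rw [hinv3 f₀ hf₀, hg, show f₀ - (f₀ - n₀) = n₀ by ring]
      exact hn₀
    have hall := hgen1 (fun k => inv k - g ∈ O) hr (A f₀) hrk₀ (A f)
    rw [hinv3 f hf, hg, show f - (f₀ - n₀) = n₀ + f - f₀ by ring] at hall
    exact hall
  -- single steps
  have hstepup : ∀ n₀ ∈ O, ∀ i : Fin d, n₀ + Pi.single i 1 ∈ O := by
    intro n₀ h i
    have := hclosure n₀ h 0 zero_mem_flipF (-(Pi.single i 1)) (neg_single_mem_flipF i)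
    rwa [show n₀ + 0 - -(Pi.single i 1) = n₀ + Pi.single i 1 by ring] at this
  have hstepdown : ∀ n₀ ∈ O, ∀ i : Fin d, n₀ - Pi.single i 1 ∈ O := by
    intro n₀ h i
    have := hclosure n₀ h (-(Pi.single i 1)) (neg_single_mem_flipF i) 0 zero_mem_flipF
    rwa [show n₀ + -(Pi.single i 1) - 0 = n₀ - Pi.single i 1 by ring] at this
  -- O = univ
  obtain ⟨n₀, hn₀⟩ := hocc
  have hall : ∀ v : Zd d, v ∈ O := by
    have key : ∀ μ : ℕ, ∀ v : Zd d, (∑ i, (v i - n₀ i).natAbs) = μ → v ∈ O := by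
      intro μ
      induction μ using Nat.strong_induction_on with
      | _ μ ih =>
        intro v hv
        by_cases hv0 : v = n₀
        · rwa [hv0]
        · have hex : ∃ i, v i ≠ n₀ i := by
            by_contra hc
            push_neg at hc
            exact hv0 (funext hc)
          obtain ⟨i, hi⟩ := hex
          have hsplit : ∀ u : Zd d, (∑ j, (u j - n₀ j).natAbs)
              = (u i - n₀ i).natAbs + ∑ j ∈ Finset.univ.erase i, (u j - n₀ j).natAbs :=
            fun u => (Finset.add_sum_erase _ _ (Finset.mem_univ i)).symm
          rcases lt_or_gt_of_ne hi with hlt | hgt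
          · set w : Zd d := v + Pi.single i 1 with hw
            have hwj : ∀ j, j ≠ i → w j = v j := by
              intro j hj
              simp [hw, Pi.single_apply, hj]
            have hwi : w i = v i + 1 := by simp [hw]
            have hsum : (∑ j, (w j - n₀ j).natAbs) = μ - 1 ∧ 1 ≤ μ := by
              rw [hsplit w, hwi]
              rw [hsplit v] at hv
              have he : (∑ j ∈ Finset.univ.erase i, (w j - n₀ j).natAbs)
                  = ∑ j ∈ Finset.univ.erase i, (v j - n₀ j).natAbs :=
                Finset.sum_congr rfl fun j hj => by rw [hwj j (Finset.mem_erase.1 hj).1]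
              rw [he]
              omega
            have hwO : w ∈ O := ih (μ - 1) (by omega) w hsum.1
            have : v = w - Pi.single i 1 := by rw [hw]; ring
            rw [this]
            exact hstepdown w hwO i
          · set w : Zd d := v - Pi.single i 1 with hw
            have hwj : ∀ j, j ≠ i → w j = v j := by
              intro j hj
              simp [hw, Pi.single_apply, hj]
            have hwi : w i = v i - 1 := by simp [hw]
            have hsum : (∑ j, (w j - n₀ j).natAbs) = μ - 1 ∧ 1 ≤ μ := by
              rw [hsplit w, hwi]
              rw [hsplit v] at hv
              have he : (∑ j ∈ Finset.univ.erase i, (w j - n₀ j).natAbs)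
                  = ∑ j ∈ Finset.univ.erase i, (v j - n₀ j).natAbs :=
                Finset.sum_congr rfl fun j hj => by rw [hwj j (Finset.mem_erase.1 hj).1]
              rw [he]
              omega
            have hwO : w ∈ O := ih (μ - 1) (by omega) w hsum.1
            have : v = w + Pi.single i 1 := by rw [hw]; ring
            rw [this]
            exact hstepup w hwO i
    intro v
    exact key _ v rfl
  obtain ⟨s₀, hs₀⟩ := hS
  have hmem : (-s₀ : Zd d) ∈ fms (flipF d) S :=
    mem_fms.2 ⟨s₀, hs₀, by rw [show -s₀ + s₀ = (0 : Zd d) by ring]; exact zero_mem_flipF⟩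
  exact hcon (-s₀) hmem (hall (-s₀))

end TDB2
namespace TDB3

open TDB TDB2

variable {d : ℕ}

theorem sum_const_bound (c : Fin (d + 1) → ℕ) (hconst : ∀ k, c (k + 1) = c k)
    (hsum : ∑ k, c k ≤ d) : ∀ k, c k = 0 := by
  have hall : ∀ k, c k = c 0 :=
    fin_cycle (r := fun k => c k = c 0) (fun k => by show c k = c 0 ↔ c (k + 1) = c 0; rw [hconst k]) rfl
  have : (∑ k, c k) = (d + 1) * c 0 := by
    rw [Finset.sum_congr rfl fun k _ => hall k, Finset.sum_const, Finset.card_univ,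
      Fintype.card_fin, smul_eq_mul]
  intro k
  rw [hall k]
  rcases Nat.eq_zero_or_pos (c 0) with h | h
  · exact h
  · exfalso
    have h5 : d + 1 ≤ (d + 1) * c 0 := Nat.le_mul_of_pos_right (d + 1) h
    omega

theorem cyc (hd : 1 ≤ d) (c : Fin (d + 1) → ℕ) (α β : Fin (d + 1)) (P : Prop) [Decidable P]
    (heq : ∀ k, c k + (if k = α ∧ P then 1 else 0) = c (k + 1) + (if k = β ∧ P then 1 else 0))
    (hsum : ∑ k, c k ≤ d) :
    (∀ k, c k ≤ 1) ∧ c α = 0 ∧ c (β + 1) = 0 := by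
  classical
  by_cases hP : P
  · by_cases hab : α = β
    · -- constant case
      have hconst : ∀ k, c (k + 1) = c k := by
        intro k
        have h := heq k
        rw [hab] at h
        exact (Nat.add_right_cancel h).symm
      have hz := sum_const_bound c hconst hsum
      exact ⟨fun k => by rw [hz k]; omega, hz α, hz (β + 1)⟩
    · -- main case
      simp only [hP, and_true] at heq
      -- ∃ k₀ with c k₀ = 0
      have hex : ∃ k₀, c k₀ = 0 := by
        by_contra hno
        push_neg at hno
        have h1 : ∀ k ∈ Finset.univ, 1 ≤ c k := fun k _ => Nat.one_le_iff_ne_zero.2 (hno k)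
        have hge := Finset.card_nsmul_le_sum Finset.univ c 1 h1
        rw [Finset.card_univ, Fintype.card_fin, smul_eq_mul, mul_one] at hge
        have hge2 : d + 1 ≤ ∑ k, c k := hge
        omega
      obtain ⟨k₀, hk₀⟩ := hex
      have hcast : ∀ i j : ℕ, i ≤ d → j ≤ d → (k₀ + (i : Fin (d + 1)) = k₀ + (j : Fin (d + 1))) → i = j := by
        intro i j hi hj hij
        have h2 : (i : Fin (d + 1)) = (j : Fin (d + 1)) := by
          have := congrArg (fun z => z - k₀) hij
          simpa using this
        have h3 : i % (d + 1) = j % (d + 1) := by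
          have := congrArg Fin.val h2
          simpa [Fin.val_natCast] using this
        rw [Nat.mod_eq_of_lt (by omega), Nat.mod_eq_of_lt (by omega)] at h3
        exact h3
      have hwalk : ∀ j : ℕ, j ≤ d →
          c (k₀ + (j : Fin (d + 1))) ≤ (if (∃ i : ℕ, i < j ∧ k₀ + (i : Fin (d + 1)) = α) then 1 else 0) := by
        intro j
        induction j with
        | zero =>
          intro _
          simp only [Nat.cast_zero, add_zero, hk₀]
          exact Nat.zero_le _
        | succ j ih =>
          intro hj1
          have ihj := ih (by omega)
          have hstep := heq (k₀ + (j : Fin (d + 1)))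
          have hrw : k₀ + ((j + 1 : ℕ) : Fin (d + 1)) = k₀ + (j : Fin (d + 1)) + 1 := by
            rw [Nat.cast_add, Nat.cast_one]; ring
          rw [hrw]
          by_cases hα : k₀ + (j : Fin (d + 1)) = α
          · have hflag : (∃ i : ℕ, i < j + 1 ∧ k₀ + (i : Fin (d + 1)) = α) := ⟨j, by omega, hα⟩
            rw [if_pos hflag]
            have hflagj : ¬(∃ i : ℕ, i < j ∧ k₀ + (i : Fin (d + 1)) = α) := by
              rintro ⟨i, hij, hiα⟩
              have := hcast i j (by omega) (by omega) (hiα.trans hα.symm)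
              omega
            rw [if_neg hflagj] at ihj
            have hβ : ¬(k₀ + (j : Fin (d + 1)) = β) := fun h => hab (hα.symm.trans h)
            rw [if_pos hα, if_neg hβ] at hstep
            omega
          · rw [if_neg hα] at hstep
            have hle : c (k₀ + (j : Fin (d + 1)) + 1) ≤ c (k₀ + (j : Fin (d + 1))) := by
              by_cases hβ : k₀ + (j : Fin (d + 1)) = β
              · rw [if_pos hβ] at hstep; omega
              · rw [if_neg hβ] at hstep; omega
            by_cases hflag : (∃ i : ℕ, i < j ∧ k₀ + (i : Fin (d + 1)) = α)
            · obtain ⟨i, hij, hiα⟩ := hflag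
              rw [if_pos ⟨i, by omega, hiα⟩]
              rw [if_pos ⟨i, hij, hiα⟩] at ihj
              omega
            · rw [if_neg hflag] at ihj
              have : c (k₀ + (j : Fin (d + 1)) + 1) ≤ 0 := le_trans hle ihj
              omega
      have hle1 : ∀ k, c k ≤ 1 := by
        intro k
        have hj := hwalk (k - k₀).val (by have := Fin.is_le (k - k₀); omega)
        rw [Fin.cast_val_eq_self, show k₀ + (k - k₀) = k by ring] at hj
        by_cases hflag : (∃ i : ℕ, i < (k - k₀).val ∧ k₀ + (i : Fin (d + 1)) = α)
        · rw [if_pos hflag] at hj; exact hj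
        · rw [if_neg hflag] at hj; omega
      refine ⟨hle1, ?_, ?_⟩
      · have h := heq α
        rw [if_pos rfl, if_neg (fun hh => hab hh)] at h
        have := hle1 (α + 1)
        omega
      · have h := heq β
        rw [if_neg (fun hh => hab hh.symm), if_pos rfl] at h
        have := hle1 β
        omega
  · -- no flip case
    have hconst : ∀ k, c (k + 1) = c k := by
      intro k
      have h := heq k
      rw [if_neg (fun hh : _ ∧ P => hP hh.2), if_neg (fun hh : _ ∧ P => hP hh.2)] at h
      omega
    have hz := sum_const_bound c hconst hsum
    exact ⟨fun k => by rw [hz k]; omega, hz α, hz (β + 1)⟩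

end TDB3
namespace TDB4

open TDB

variable {d : ℕ}

def Reach (S : Finset (Zd d)) : ℕ → Zd d → Zd d → Prop
  | 0, u, v => u = v
  | (n + 1), u, v => ∃ w, Reach S n u w ∧ (ZAdj w v ∧ w ∈ S ∧ v ∈ S)

theorem reach_of_rtg {S : Finset (Zd d)} {u v : Zd d}
    (h : Relation.ReflTransGen (fun a b => ZAdj a b ∧ a ∈ S ∧ b ∈ S) u v) :
    ∃ n, Reach S n u v := by
  induction h with
  | refl => exact ⟨0, rfl⟩
  | tail hab hbc ih =>
    obtain ⟨n, hn⟩ := ih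
    exact ⟨n + 1, _, hn, hbc⟩

theorem rtg_symm {γ : Type*} {r : γ → γ → Prop} (hr : ∀ a b, r a b → r b a) {a b : γ}
    (h : Relation.ReflTransGen r a b) : Relation.ReflTransGen r b a := by
  induction h with
  | refl => exact .refl
  | tail hab hbc ih =>
    exact Relation.ReflTransGen.trans (Relation.ReflTransGen.single (hr _ _ hbc)) ih

theorem zadj_symm {a b : Zd d} (h : ZAdj a b) : ZAdj b a := by
  obtain ⟨i, h⟩ := h
  exact ⟨i, h.symm⟩

theorem exists_removable {S : Finset (Zd d)} (hconn : FinsetConnected S) (h2 : 2 ≤ S.card) :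
    ∃ s ∈ S, (S.erase s).Nonempty ∧ FinsetConnected (S.erase s) ∧ ∃ s' ∈ S.erase s, ZAdj s' s := by
  classical
  obtain ⟨u, hu⟩ := Finset.card_pos.1 (Nat.lt_of_lt_of_le Nat.zero_lt_two h2)
  have hex : ∀ v ∈ S, ∃ n, Reach S n u v := fun v hv => reach_of_rtg (hconn u hu v hv)
  set D : Zd d → ℕ := fun v => if h : ∃ n, Reach S n u v then Nat.find h else 0 with hD
  have hDspec : ∀ v ∈ S, Reach S (D v) u v := by
    intro v hv
    rw [hD]
    simp only
    rw [dif_pos (hex v hv)]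
    exact Nat.find_spec (hex v hv)
  have hDmin : ∀ v ∈ S, ∀ m, Reach S m u v → D v ≤ m := by
    intro v hv m hm
    rw [hD]
    simp only
    rw [dif_pos (hex v hv)]
    exact Nat.find_le hm
  obtain ⟨s, hsS, hsmax⟩ := Finset.exists_max_image S D ⟨u, hu⟩
  have hD0 : ∀ v ∈ S, D v = 0 → v = u := by
    intro v hv h0
    have := hDspec v hv
    rw [h0] at this
    exact this.symm
  have hDu : D u = 0 := Nat.le_zero.1 (hDmin u hu 0 rfl)
  have hsne : s ≠ u := by
    intro h
    have hall : ∀ v ∈ S, v = u := fun v hv =>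
      hD0 v hv (Nat.le_zero.1 (by have h3 := hsmax v hv; rw [h, hDu] at h3; exact h3))
    have hsub : S ⊆ {u} := fun v hv => Finset.mem_singleton.2 (hall v hv)
    have h4 := Finset.card_le_card hsub
    rw [Finset.card_singleton] at h4
    omega
  have hDs : D s ≠ 0 := fun h0 => hsne (hD0 s hsS h0)
  obtain ⟨ms, hms⟩ : ∃ ms, D s = ms + 1 := ⟨D s - 1, by omega⟩
  have hsp := hDspec s hsS
  rw [hms] at hsp
  obtain ⟨w₀, hw₀, hadj₀⟩ := hsp
  have hw₀S : w₀ ∈ S := hadj₀.2.1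
  have hw₀s : w₀ ≠ s := by
    rintro rfl
    have := hDmin w₀ hw₀S ms hw₀
    omega
  have hreach' : ∀ m, ∀ v ∈ S.erase s, D v = m →
      Relation.ReflTransGen (fun a b => ZAdj a b ∧ a ∈ S.erase s ∧ b ∈ S.erase s) u v := by
    intro m
    induction m using Nat.strong_induction_on with
    | _ m ih =>
      intro v hv hDv
      rcases Nat.eq_zero_or_pos m with rfl | hm
      · rw [hD0 v (Finset.mem_of_mem_erase hv) hDv]
      · obtain ⟨m', rfl⟩ : ∃ m', m = m' + 1 := ⟨m - 1, by omega⟩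
        have hsp := hDspec v (Finset.mem_of_mem_erase hv)
        rw [hDv] at hsp
        obtain ⟨w, hw, hadj⟩ := hsp
        have hwS : w ∈ S := hadj.2.1
        have hDw : D w ≤ m' := hDmin w hwS m' hw
        have hws : w ≠ s := by
          rintro rfl
          have := hsmax v (Finset.mem_of_mem_erase hv)
          omega
        have hwe : w ∈ S.erase s := Finset.mem_erase.2 ⟨hws, hwS⟩
        exact (ih (D w) (by omega) w hwe rfl).tail ⟨hadj.1, hwe, hv⟩
  refine ⟨s, hsS, ⟨u, Finset.mem_erase.2 ⟨Ne.symm hsne, hu⟩⟩, ?_, w₀, Finset.mem_erase.2 ⟨hw₀s, hw₀S⟩, hadj₀.1⟩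
  intro v hv w hw
  have h1 := hreach' (D v) v hv rfl
  have h2' := hreach' (D w) w hw rfl
  exact Relation.ReflTransGen.trans
    (rtg_symm (fun a b hab => ⟨zadj_symm hab.1, hab.2.2, hab.2.1⟩) h1) h2'

end TDB4
namespace TDB5

open TDB TDB2 TDB3

variable {d : ℕ} {x y : Zd d → Fin (d + 1)}

open scoped Classical in
theorem window_occ_unique
    (hd : 1 ≤ d)
    (hne : ∀ v, x v ≠ y v ↔ v ∈ flipF d)
    (hcnt : ∀ S p, (occs x S p \ occs y S p).ncard = (occs y S p \ occs x S p).ncard)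
    (hsub1 : ∀ f ∈ flipF d, y f = x f - 1)
    {S' : Finset (Zd d)} {s : Zd d} (hs : s ∉ S') (hS' : S'.Nonempty)
    (hadj : ∃ s' ∈ S', ZAdj s' s)
    (hIHx : ∀ n ∈ fms (flipF d) S', ∀ m ∈ fms (flipF d) S',
      (∀ t ∈ S', x (n + t) = x (m + t)) → n = m)
    (hIHy : ∀ n ∈ fms (flipF d) S', ∀ m ∈ fms (flipF d) S',
      (∀ t ∈ S', y (n + t) = y (m + t)) → n = m)
    (p' : Zd d → Fin (d + 1))
    (hEx : ∃ n ∈ fms (flipF d) S', n ∈ occs x S' p')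
    (hEy : ∃ n ∈ fms (flipF d) S', n ∈ occs y S' p') :
    (∀ n, n ∈ occs x S' p' → n ∈ fms (flipF d) (insert s S') →
     ∀ m, m ∈ occs x S' p' → m ∈ fms (flipF d) (insert s S') →
     x (n + s) = x (m + s) → n = m) ∧
    (∀ n, n ∈ occs y S' p' → n ∈ fms (flipF d) (insert s S') →
     ∀ m, m ∈ occs y S' p' → m ∈ fms (flipF d) (insert s S') →
     y (n + s) = y (m + s) → n = m) := by
  obtain ⟨n_x, hnxW, hnxO⟩ := hEx
  obtain ⟨n_y, hnyW, hnyO⟩ := hEy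
  have h10 : (1 : Fin (d + 1)) ≠ 0 := by
    intro h
    have h1 := congrArg Fin.val h
    rw [Fin.val_one', Nat.mod_eq_of_lt (by omega)] at h1
    simp at h1
  -- uniqueness in the small window
  have hUx : ∀ w, w ∈ occs x S' p' → w ∈ fms (flipF d) S' → w = n_x := by
    intro w h1 h2
    exact hIHx w h2 n_x hnxW (fun t ht => by rw [h1 t ht, hnxO t ht])
  have hUy : ∀ w, w ∈ occs y S' p' → w ∈ fms (flipF d) S' → w = n_y := by
    intro w h1 h2
    exact hIHy w h2 n_y hnyW (fun t ht => by rw [h1 t ht, hnyO t ht])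
  -- off-window occurrences agree
  have hoffw : ∀ w, w ∉ fms (flipF d) S' → (w ∈ occs x S' p' ↔ w ∈ occs y S' p') := by
    intro w hw
    have heqpt : ∀ t ∈ S', x (w + t) = y (w + t) := by
      intro t ht
      by_contra hne'
      exact hw (mem_fms.2 ⟨t, ht, (hne _).1 hne'⟩)
    constructor
    · intro h t ht
      rw [← heqpt t ht]
      exact h t ht
    · intro h t ht
      rw [heqpt t ht]
      exact h t ht
  set C₁ : Finset (Zd d) :=
    (fms (flipF d) (insert s S') \ fms (flipF d) S').filter
      (fun w => ∀ t ∈ S', x (w + t) = p' t) with hC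
  have hC₁occ : ∀ w ∈ C₁, w ∈ occs x S' p' :=
    fun w hw t ht => (Finset.mem_filter.1 hw).2 t ht
  have hC₁nw : ∀ w ∈ C₁, w ∉ fms (flipF d) S' :=
    fun w hw => (Finset.mem_sdiff.1 (Finset.mem_filter.1 hw).1).2
  have hC₁F : ∀ w ∈ C₁, w + s ∈ flipF d := by
    intro w hw
    have h1 := (Finset.mem_sdiff.1 (Finset.mem_filter.1 hw).1).1
    rw [fms_insert, Finset.mem_union] at h1
    rcases h1 with h1 | h1
    · exact mem_fms_singleton.1 h1
    · exact absurd h1 (hC₁nw w hw)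
  have hC₁occy : ∀ w ∈ C₁, w ∈ occs y S' p' :=
    fun w hw => (hoffw w (hC₁nw w hw)).1 (hC₁occ w hw)
  -- window decomposition
  have hWx : ∀ w, (w ∈ occs x S' p' ∧ w ∈ fms (flipF d) (insert s S')) ↔ (w = n_x ∨ w ∈ C₁) := by
    intro w
    constructor
    · rintro ⟨h1, h2⟩
      by_cases h3 : w ∈ fms (flipF d) S'
      · exact Or.inl (hUx w h1 h3)
      · exact Or.inr (Finset.mem_filter.2 ⟨Finset.mem_sdiff.2 ⟨h2, h3⟩, fun t ht => h1 t ht⟩)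
    · rintro (rfl | h)
      · exact ⟨hnxO, fms_mono (Finset.subset_insert s S') hnxW⟩
      · exact ⟨hC₁occ w h, (Finset.mem_sdiff.1 (Finset.mem_filter.1 h).1).1⟩
  have hWy : ∀ w, (w ∈ occs y S' p' ∧ w ∈ fms (flipF d) (insert s S')) ↔ (w = n_y ∨ w ∈ C₁) := by
    intro w
    constructor
    · rintro ⟨h1, h2⟩
      by_cases h3 : w ∈ fms (flipF d) S'
      · exact Or.inl (hUy w h1 h3)
      · exact Or.inr (Finset.mem_filter.2 ⟨Finset.mem_sdiff.2 ⟨h2, h3⟩,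
          fun t ht => (hoffw w h3).2 h1 t ht⟩)
    · rintro (rfl | h)
      · exact ⟨hnyO, fms_mono (Finset.subset_insert s S') hnyW⟩
      · exact ⟨hC₁occy w h, (Finset.mem_sdiff.1 (Finset.mem_filter.1 h).1).1⟩
  have hnxC : n_x ∉ C₁ := fun h => hC₁nw n_x h hnxW
  have hnyC : n_y ∉ C₁ := fun h => hC₁nw n_y h hnyW
  have hnxy : n_x ∈ occs y S' p' ↔ n_x = n_y :=
    ⟨fun h => hUy n_x h hnxW, fun h => by rw [h]; exact hnyO⟩
  have hnyx : n_y ∈ occs x S' p' ↔ n_y = n_x :=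
    ⟨fun h => hUx n_y h hnyW, fun h => by rw [h]; exact hnxO⟩
  set α := x (n_x + s) with hα
  set β := y (n_y + s) with hβ
  set P : Prop := ¬(n_x = n_y ∧ α = β) with hP
  set c : Fin (d + 1) → ℕ := fun k => (C₁.filter (fun w => x (w + s) = k)).card with hc
  -- occurrences of marked patterns
  have hQx : ∀ (k : Fin (d + 1)) w, w ∈ occs x (insert s S') (Function.update p' s k) ↔
      (w ∈ occs x S' p' ∧ x (w + s) = k) := by
    intro k w
    constructor
    · intro h
      refine ⟨fun t ht => ?_, ?_⟩
      · have h2 := h t (Finset.mem_insert_of_mem ht)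
        rwa [Function.update_of_ne (by rintro rfl; exact hs ht)] at h2
      · have h2 := h s (Finset.mem_insert_self s S')
        rwa [Function.update_self] at h2
    · rintro ⟨h1, h2⟩ t ht
      rcases Finset.mem_insert.1 ht with rfl | ht'
      · rwa [Function.update_self]
      · rw [Function.update_of_ne (by rintro rfl; exact hs ht')]
        exact h1 t ht'
  have hQy : ∀ (k : Fin (d + 1)) w, w ∈ occs y (insert s S') (Function.update p' s k) ↔
      (w ∈ occs y S' p' ∧ y (w + s) = k) := by
    intro k w
    constructor
    · intro h
      refine ⟨fun t ht => ?_, ?_⟩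
      · have h2 := h t (Finset.mem_insert_of_mem ht)
        rwa [Function.update_of_ne (by rintro rfl; exact hs ht)] at h2
      · have h2 := h s (Finset.mem_insert_self s S')
        rwa [Function.update_self] at h2
    · rintro ⟨h1, h2⟩ t ht
      rcases Finset.mem_insert.1 ht with rfl | ht'
      · rwa [Function.update_self]
      · rw [Function.update_of_ne (by rintro rfl; exact hs ht')]
        exact h1 t ht'
  -- the two difference sets
  have hDx : ∀ k : Fin (d + 1),
      occs x (insert s S') (Function.update p' s k) \ occs y (insert s S') (Function.update p' s k)
        = ↑((C₁.filter (fun w => x (w + s) = k)) ∪ (if k = α ∧ P then {n_x} else ∅)) := by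
    intro k
    ext w
    simp only [Set.mem_diff, Finset.coe_union, Set.mem_union, Finset.mem_coe,
      Finset.mem_filter]
    rw [hQx, hQy]
    constructor
    · rintro ⟨⟨h1, h2⟩, h3⟩
      by_cases h4 : w ∈ fms (flipF d) S'
      · have hwn : w = n_x := hUx w h1 h4
        subst hwn
        have hkα : k = α := by rw [hα, h2]
        have hPP : P := by
          rintro ⟨he1, he2⟩
          exact h3 ⟨hnxy.2 he1, by rw [he1, ← hβ, ← he2, hkα]⟩
        right
        rw [if_pos ⟨hkα, hPP⟩]
        exact Finset.mem_singleton_self _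
      · have h5 : w ∈ occs y S' p' := (hoffw w h4).1 h1
        have h6 : y (w + s) ≠ k := fun hy => h3 ⟨h5, hy⟩
        have h7 : w + s ∈ flipF d := (hne _).1 (by rw [h2]; exact fun hh => h6 hh.symm)
        left
        refine ⟨Finset.mem_filter.2 ⟨Finset.mem_sdiff.2 ⟨?_, h4⟩, fun t ht => h1 t ht⟩, h2⟩
        exact mem_fms.2 ⟨s, Finset.mem_insert_self s S', h7⟩
    · rintro (⟨h1, h2⟩ | h1)
      · refine ⟨⟨hC₁occ w h1, h2⟩, ?_⟩
        rintro ⟨-, h3⟩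
        have h4 := hsub1 (w + s) (hC₁F w h1)
        rw [h3, h2] at h4
        exact h10 (by rwa [eq_comm, sub_eq_self] at h4)
      · by_cases h2 : k = α ∧ P
        · rw [if_pos h2] at h1
          have hwn : w = n_x := Finset.mem_singleton.1 h1
          subst hwn
          refine ⟨⟨hnxO, by rw [h2.1]⟩, ?_⟩
          rintro ⟨h3, h4⟩
          have h5 : w = n_y := hUy w h3 hnxW
          exact h2.2 ⟨h5, by rw [← h2.1, hβ, ← h5, h4]⟩
        · rw [if_neg h2] at h1
          exact absurd h1 (Finset.notMem_empty w)
  have hDy : ∀ k : Fin (d + 1),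
      occs y (insert s S') (Function.update p' s k) \ occs x (insert s S') (Function.update p' s k)
        = ↑((C₁.filter (fun w => x (w + s) = k + 1)) ∪ (if k = β ∧ P then {n_y} else ∅)) := by
    intro k
    ext w
    simp only [Set.mem_diff, Finset.coe_union, Set.mem_union, Finset.mem_coe,
      Finset.mem_filter]
    rw [hQx, hQy]
    constructor
    · rintro ⟨⟨h1, h2⟩, h3⟩
      by_cases h4 : w ∈ fms (flipF d) S'
      · have hwn : w = n_y := hUy w h1 h4
        subst hwn
        have hkβ : k = β := by rw [hβ, h2]
        have hPP : P := by
          rintro ⟨he1, he2⟩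
          refine h3 ⟨hnyx.2 he1.symm, ?_⟩
          rw [← he1] at *
          rw [← hα, he2, hkβ]
        right
        rw [if_pos ⟨hkβ, hPP⟩]
        exact Finset.mem_singleton_self _
      · have h5 : w ∈ occs x S' p' := (hoffw w h4).2 h1
        have h6 : x (w + s) ≠ k := fun hx => h3 ⟨h5, hx⟩
        have h7 : w + s ∈ flipF d := (hne _).1 (by rw [h2]; exact h6)
        have h8 : x (w + s) = k + 1 := by
          have h9 := hsub1 (w + s) h7
          rw [h2] at h9
          exact (sub_eq_iff_eq_add.1 h9.symm)
        left
        refine ⟨Finset.mem_filter.2 ⟨Finset.mem_sdiff.2 ⟨?_, h4⟩, fun t ht => h5 t ht⟩, h8⟩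
        exact mem_fms.2 ⟨s, Finset.mem_insert_self s S', h7⟩
    · rintro (⟨h1, h2⟩ | h1)
      · have h4 := hsub1 (w + s) (hC₁F w h1)
        rw [h2] at h4
        refine ⟨⟨hC₁occy w h1, by rw [h4]; ring⟩, ?_⟩
        rintro ⟨-, h3⟩
        rw [h3] at h2
        exact h10 (by
          have := left_eq_add.1 h2
          exact this)
      · by_cases h2 : k = β ∧ P
        · rw [if_pos h2] at h1
          have hwn : w = n_y := Finset.mem_singleton.1 h1
          subst hwn
          refine ⟨⟨hnyO, by rw [h2.1]⟩, ?_⟩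
          rintro ⟨h3, h4⟩
          have h5 : w = n_x := hUx w h3 hnyW
          exact h2.2 ⟨h5.symm, by rw [← h2.1, hα, ← h5, h4]⟩
        · rw [if_neg h2] at h1
          exact absurd h1 (Finset.notMem_empty w)
  -- the balance equations
  have heq : ∀ k : Fin (d + 1),
      c k + (if k = α ∧ P then 1 else 0) = c (k + 1) + (if k = β ∧ P then 1 else 0) := by
    intro k
    have h1 := hcnt (insert s S') (Function.update p' s k)
    rw [hDx k, hDy k, Set.ncard_coe_finset, Set.ncard_coe_finset] at h1
    have h2 : ((C₁.filter (fun w => x (w + s) = k)) ∪ (if k = α ∧ P then {n_x} else ∅)).card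
        = c k + (if k = α ∧ P then 1 else 0) := by
      by_cases h3 : k = α ∧ P
      · rw [if_pos h3, if_pos h3, Finset.card_union_of_disjoint, Finset.card_singleton]
        rw [Finset.disjoint_singleton_right]
        exact fun h => hnxC (Finset.mem_filter.1 h).1
      · rw [if_neg h3, if_neg h3, Finset.union_empty, add_zero]
    have h4 : ((C₁.filter (fun w => x (w + s) = k + 1)) ∪ (if k = β ∧ P then {n_y} else ∅)).card
        = c (k + 1) + (if k = β ∧ P then 1 else 0) := by
      by_cases h3 : k = β ∧ P
      · rw [if_pos h3, if_pos h3, Finset.card_union_of_disjoint, Finset.card_singleton]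
        rw [Finset.disjoint_singleton_right]
        exact fun h => hnyC (Finset.mem_filter.1 h).1
      · rw [if_neg h3, if_neg h3, Finset.union_empty, add_zero]
    rw [h2, h4] at h1
    exact h1
  -- the budget
  obtain ⟨s', hs'S, hadj'⟩ := hadj
  obtain ⟨i, hi⟩ := hadj'
  have hw₀ : ∃ w₀, w₀ ∈ fms (flipF d) {s} ∧ w₀ ∈ fms (flipF d) S' := by
    rcases hi with h1 | h1
    · refine ⟨-s, mem_fms_singleton.2 ?_, mem_fms.2 ⟨s', hs'S, ?_⟩⟩
      · rw [show -s + s = (0 : Zd d) by ring]; exact zero_mem_flipF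
      · rw [show -s + s' = -(s - s') by ring, h1]; exact neg_single_mem_flipF i
    · refine ⟨-s', mem_fms_singleton.2 ?_, mem_fms.2 ⟨s', hs'S, ?_⟩⟩
      · rw [show -s' + s = -(s' - s) by ring, h1]; exact neg_single_mem_flipF i
      · rw [show -s' + s' = (0 : Zd d) by ring]; exact zero_mem_flipF
  obtain ⟨w₀, hw₀1, hw₀2⟩ := hw₀
  have hsum : ∑ k, c k ≤ d := by
    have h1 : C₁.card = ∑ k, c k :=
      Finset.card_eq_sum_card_fiberwise (fun w _ => Finset.mem_univ (x (w + s)))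
    have h2 : C₁ ⊆ (fms (flipF d) {s}).erase w₀ := by
      intro w hw
      refine Finset.mem_erase.2 ⟨?_, mem_fms_singleton.2 (hC₁F w hw)⟩
      rintro rfl
      exact hC₁nw w hw hw₀2
    have h3 := Finset.card_le_card h2
    rw [Finset.card_erase_of_mem hw₀1] at h3
    have h5 : (fms (flipF d) {s}).card ≤ d + 1 := by
      rw [fms, Finset.image₂_singleton_right]
      exact le_trans Finset.card_image_le (le_of_eq card_flipF)
    omega
  -- apply the cyclic lemma
  obtain ⟨hle1, hcα, hcβ⟩ := cyc hd c α β P heq hsum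
  have hck : ∀ k, (C₁.filter (fun w => x (w + s) = k)).card = c k := fun k => rfl
  have hfilterzero : ∀ (w : Zd d) (k : Fin (d + 1)), c k = 0 →
      w ∈ C₁ → x (w + s) = k → False := by
    intro w k h0 hw hk
    have h1 : w ∈ C₁.filter (fun w => x (w + s) = k) := Finset.mem_filter.2 ⟨hw, hk⟩
    have h2 : C₁.filter (fun w => x (w + s) = k) = ∅ := Finset.card_eq_zero.1 (by rw [hck]; exact h0)
    rw [h2] at h1
    exact Finset.notMem_empty w h1
  have hfilter2 : ∀ (w w' : Zd d) (k : Fin (d + 1)), w ≠ w' → w ∈ C₁ → w' ∈ C₁ →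
      x (w + s) = k → x (w' + s) = k → False := by
    intro w w' k hne' hw hw' hk hk'
    have hsub2 : ({w, w'} : Finset (Zd d)) ⊆ C₁.filter (fun u => x (u + s) = k) := by
      intro u hu
      rcases Finset.mem_insert.1 hu with rfl | hu
      · exact Finset.mem_filter.2 ⟨hw, hk⟩
      · rw [Finset.mem_singleton.1 hu]
        exact Finset.mem_filter.2 ⟨hw', hk'⟩
    have h2 := Finset.card_le_card hsub2
    rw [Finset.card_insert_of_notMem (by simp [hne']), Finset.card_singleton, hck] at h2
    have h3 := hle1 k
    omega
  have hxyC : ∀ w ∈ C₁, x (w + s) = y (w + s) + 1 := by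
    intro w hw
    have h1 := hsub1 (w + s) (hC₁F w hw)
    rw [h1]
    ring
  constructor
  · intro n hn1 hn2 m hm1 hm2 hxy
    rcases (hWx n).1 ⟨hn1, hn2⟩ with rfl | hnC
    · rcases (hWx m).1 ⟨hm1, hm2⟩ with rfl | hmC
      · rfl
      · exact (hfilterzero m α hcα hmC (by rw [hα]; exact hxy.symm)).elim
    · rcases (hWx m).1 ⟨hm1, hm2⟩ with rfl | hmC
      · exact (hfilterzero n α hcα hnC (by rw [hα]; exact hxy)).elim
      · by_contra hnm
        exact hfilter2 n m (x (n + s)) hnm hnC hmC rfl hxy.symm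
  · intro n hn1 hn2 m hm1 hm2 hxy
    rcases (hWy n).1 ⟨hn1, hn2⟩ with rfl | hnC
    · rcases (hWy m).1 ⟨hm1, hm2⟩ with rfl | hmC
      · rfl
      · refine (hfilterzero m (β + 1) hcβ hmC ?_).elim
        rw [hxyC m hmC, ← hxy, ← hβ]
    · rcases (hWy m).1 ⟨hm1, hm2⟩ with rfl | hmC
      · refine (hfilterzero n (β + 1) hcβ hnC ?_).elim
        rw [hxyC n hnC, hxy, ← hβ]
      · by_contra hnm
        refine hfilter2 n m (x (n + s)) hnm hnC hmC rfl ?_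
        rw [hxyC m hmC, ← hxy, ← hxyC n hnC]

end TDB5
namespace TDB6

open TDB TDB2 TDB3 TDB4 TDB5

variable {d : ℕ} {x y : Zd d → Fin (d + 1)}

theorem occ_window_x
    (hne : ∀ v, x v ≠ y v ↔ v ∈ flipF d)
    (hcnt : ∀ S p, (occs x S p \ occs y S p).ncard = (occs y S p \ occs x S p).ncard)
    (hbij : Set.BijOn x ↑(flipF d) Set.univ)
    (hsub1 : ∀ f ∈ flipF d, y f = x f - 1)
    {S : Finset (Zd d)} (hS : S.Nonempty) {p : Zd d → Fin (d + 1)}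
    (hocc : (occs x S p).Nonempty) :
    ∃ n ∈ fms (flipF d) S, n ∈ occs x S p := by
  have hxSurj : ∀ k, ∃ f, f ∈ (flipF d : Finset (Zd d)) ∧ x f = k := by
    intro k
    obtain ⟨f, hf, hfx⟩ := hbij.surjOn (Set.mem_univ k)
    exact ⟨f, hf, hfx⟩
  choose invF hinv1 hinv2 using hxSurj
  have hinv3 : ∀ f ∈ flipF d, invF (x f) = f :=
    fun f hf => hbij.injOn (hinv1 _) hf (hinv2 _)
  exact occ_in_window hne hcnt invF hinv1 hinv2 hinv3 1 hsub1
    (fun r hr k₀ h0 => fin_cycle hr h0) hS hocc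

theorem occ_window_y
    (hne : ∀ v, x v ≠ y v ↔ v ∈ flipF d)
    (hcnt : ∀ S p, (occs x S p \ occs y S p).ncard = (occs y S p \ occs x S p).ncard)
    (hbij : Set.BijOn x ↑(flipF d) Set.univ)
    (hsub1 : ∀ f ∈ flipF d, y f = x f - 1)
    {S : Finset (Zd d)} (hS : S.Nonempty) {p : Zd d → Fin (d + 1)}
    (hocc : (occs y S p).Nonempty) :
    ∃ n ∈ fms (flipF d) S, n ∈ occs y S p := by
  have hne' : ∀ v, y v ≠ x v ↔ v ∈ flipF d := fun v => ⟨fun h => (hne v).1 (Ne.symm h),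
    fun h => Ne.symm ((hne v).2 h)⟩
  have hcnt' : ∀ S p, (occs y S p \ occs x S p).ncard = (occs x S p \ occs y S p).ncard :=
    fun S p => (hcnt S p).symm
  have hxSurj : ∀ k, ∃ f, f ∈ (flipF d : Finset (Zd d)) ∧ x f = k := by
    intro k
    obtain ⟨f, hf, hfx⟩ := hbij.surjOn (Set.mem_univ k)
    exact ⟨f, hf, hfx⟩
  choose invF hinv1 hinv2 using hxSurj
  have hinv3 : ∀ f ∈ flipF d, invF (x f) = f :=
    fun f hf => hbij.injOn (hinv1 _) hf (hinv2 _)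
  -- inverse for y
  have hinvy1 : ∀ k, invF (k + 1) ∈ flipF d := fun k => hinv1 (k + 1)
  have hinvy2 : ∀ k, y (invF (k + 1)) = k := by
    intro k
    rw [hsub1 _ (hinv1 (k + 1)), hinv2 (k + 1)]
    ring
  have hinvy3 : ∀ f ∈ flipF d, invF (y f + 1) = f := by
    intro f hf
    rw [hsub1 f hf, show x f - 1 + 1 = x f by ring]
    exact hinv3 f hf
  have hσy : ∀ f ∈ flipF d, x f = y f - (-1) := by
    intro f hf
    rw [hsub1 f hf]
    ring
  have hgen : ∀ r : Fin (d + 1) → Prop, (∀ k, r k ↔ r (k + -1)) → ∀ k₀, r k₀ → ∀ k, r k := by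
    intro r hr k₀ h0
    have hstep : ∀ k, r k ↔ r (k + 1) := by
      intro k
      have h := hr (k + 1)
      rw [show k + 1 + -1 = k by ring] at h
      exact h.symm
    exact fin_cycle hstep h0
  exact occ_in_window hne' hcnt' (fun k => invF (k + 1)) hinvy1 hinvy2
    (fun f hf => hinvy3 f hf) (-1) hσy hgen hS hocc

theorem main_inj (hd : 1 ≤ d)
    (hne : ∀ v, x v ≠ y v ↔ v ∈ flipF d)
    (hcnt : ∀ S p, (occs x S p \ occs y S p).ncard = (occs y S p \ occs x S p).ncard)
    (hbij : Set.BijOn x ↑(flipF d) Set.univ)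
    (hsub1 : ∀ f ∈ flipF d, y f = x f - 1) :
    ∀ S : Finset (Zd d), S.Nonempty → FinsetConnected S →
      (∀ n ∈ fms (flipF d) S, ∀ m ∈ fms (flipF d) S,
        (∀ t ∈ S, x (n + t) = x (m + t)) → n = m) ∧
      (∀ n ∈ fms (flipF d) S, ∀ m ∈ fms (flipF d) S,
        (∀ t ∈ S, y (n + t) = y (m + t)) → n = m) := by
  have hne' : ∀ v, y v ≠ x v ↔ v ∈ flipF d := fun v => ⟨fun h => (hne v).1 (Ne.symm h),
    fun h => Ne.symm ((hne v).2 h)⟩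
  have hcnt' : ∀ S p, (occs y S p \ occs x S p).ncard = (occs x S p \ occs y S p).ncard :=
    fun S p => (hcnt S p).symm
  have hyInj : ∀ f ∈ flipF d, ∀ g ∈ flipF d, y f = y g → f = g := by
    intro f hf g hg h
    apply hbij.injOn hf hg
    have h1 := hsub1 f hf
    have h2 := hsub1 g hg
    rw [h1, h2] at h
    have := congrArg (fun z => z + (1 : Fin (d + 1))) h
    simpa [sub_add_cancel] using this
  suffices H : ∀ N (S : Finset (Zd d)), S.card ≤ N → S.Nonempty → FinsetConnected S →
      (∀ n ∈ fms (flipF d) S, ∀ m ∈ fms (flipF d) S,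
        (∀ t ∈ S, x (n + t) = x (m + t)) → n = m) ∧
      (∀ n ∈ fms (flipF d) S, ∀ m ∈ fms (flipF d) S,
        (∀ t ∈ S, y (n + t) = y (m + t)) → n = m) by
    exact fun S hS hconn => H S.card S le_rfl hS hconn
  intro N
  induction N with
  | zero =>
    intro S hcard hS _
    exact absurd (Finset.card_pos.2 hS) (by omega)
  | succ N ih =>
    intro S hcard hS hconn
    by_cases h1 : S.card = 1
    · -- base case
      obtain ⟨t, rfl⟩ := Finset.card_eq_one.1 h1
      constructor
      · intro n hn m hm hwin
        have hnF : n + t ∈ flipF d := by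
          obtain ⟨t', ht', h⟩ := mem_fms.1 hn
          rwa [Finset.mem_singleton.1 ht'] at h
        have hmF : m + t ∈ flipF d := by
          obtain ⟨t', ht', h⟩ := mem_fms.1 hm
          rwa [Finset.mem_singleton.1 ht'] at h
        have := hbij.injOn hnF hmF (hwin t (Finset.mem_singleton_self t))
        exact add_right_cancel this
      · intro n hn m hm hwin
        have hnF : n + t ∈ flipF d := by
          obtain ⟨t', ht', h⟩ := mem_fms.1 hn
          rwa [Finset.mem_singleton.1 ht'] at h
        have hmF : m + t ∈ flipF d := by
          obtain ⟨t', ht', h⟩ := mem_fms.1 hm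
          rwa [Finset.mem_singleton.1 ht'] at h
        have := hyInj _ hnF _ hmF (hwin t (Finset.mem_singleton_self t))
        exact add_right_cancel this
    · -- inductive step
      have h2 : 2 ≤ S.card := by
        have := Finset.card_pos.2 hS
        omega
      obtain ⟨s, hsS, hSne, hSconn, s', hs'mem, hadj⟩ := exists_removable hconn h2
      have hins : insert s (S.erase s) = S := Finset.insert_erase hsS
      have hcard' : (S.erase s).card ≤ N := by
        rw [Finset.card_erase_of_mem hsS]
        omega
      obtain ⟨IHx, IHy⟩ := ih (S.erase s) hcard' hSne hSconn
      have hsnotm : s ∉ S.erase s := Finset.notMem_erase s S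
      constructor
      · intro n hn m hm hwin
        rw [← hins] at hn hm
        have hnO : n ∈ occs x (S.erase s) (fun v => x (n + v)) := fun t _ => rfl
        have hmO : m ∈ occs x (S.erase s) (fun v => x (n + v)) :=
          fun t ht => (hwin t (Finset.mem_of_mem_erase ht)).symm
        have hEx : ∃ w ∈ fms (flipF d) (S.erase s), w ∈ occs x (S.erase s) (fun v => x (n + v)) :=
          occ_window_x hne hcnt hbij hsub1 hSne ⟨n, hnO⟩
        have hEy : ∃ w ∈ fms (flipF d) (S.erase s), w ∈ occs y (S.erase s) (fun v => x (n + v)) :=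
          occ_window_y hne hcnt hbij hsub1 hSne (balance_nonempty hne hcnt ⟨n, hnO⟩)
        have key := window_occ_unique hd hne hcnt hsub1 hsnotm hSne ⟨s', hs'mem, hadj⟩
          IHx IHy (fun v => x (n + v)) hEx hEy
        exact key.1 n hnO hn m hmO hm (hwin s hsS)
      · intro n hn m hm hwin
        rw [← hins] at hn hm
        have hnO : n ∈ occs y (S.erase s) (fun v => y (n + v)) := fun t _ => rfl
        have hmO : m ∈ occs y (S.erase s) (fun v => y (n + v)) :=
          fun t ht => (hwin t (Finset.mem_of_mem_erase ht)).symm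
        have hEy : ∃ w ∈ fms (flipF d) (S.erase s), w ∈ occs y (S.erase s) (fun v => y (n + v)) :=
          occ_window_y hne hcnt hbij hsub1 hSne ⟨n, hnO⟩
        have hEx : ∃ w ∈ fms (flipF d) (S.erase s), w ∈ occs x (S.erase s) (fun v => y (n + v)) :=
          occ_window_x hne hcnt hbij hsub1 hSne (balance_nonempty hne' hcnt' ⟨n, hnO⟩)
        have key := window_occ_unique hd hne hcnt hsub1 hsnotm hSne ⟨s', hs'mem, hadj⟩
          IHx IHy (fun v => y (n + v)) hEx hEy
        exact key.2 n hnO hn m hmO hm (hwin s hsS)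

end TDB6
theorem two_distinct_bijections' {d : ℕ} (x y : Zd d → Fin (d + 1))
    (hind : Indistinguishable x y) (hflip : FlipCondition x y)
    (S : Finset (Zd d)) (hS : S.Nonempty) (hconn : FinsetConnected S) :
    langOn x S = langOn y S ∧
    Set.BijOn (fun n : Zd d => fun s : S => x (n + (s : Zd d)))
      (↑(fms (flipF d) S)) (langOn x S) ∧
    Set.BijOn (fun n : Zd d => fun s : S => y (n + (s : Zd d)))
      (↑(fms (flipF d) S)) (langOn x S) ∧
    ¬ Set.EqOn (fun n : Zd d => fun s : S => x (n + (s : Zd d)))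
      (fun n : Zd d => fun s : S => y (n + (s : Zd d))) (↑(fms (flipF d) S)) := by
  classical
  obtain ⟨hdiff, hbij, hx0, hsub1⟩ := hflip
  have hne : ∀ v, x v ≠ y v ↔ v ∈ flipF d :=
    fun v => (Set.ext_iff.1 hdiff v).trans Finset.mem_coe
  -- the degenerate case d = 0 is impossible
  rcases Nat.eq_zero_or_pos d with hd0 | hd
  · subst hd0
    have h1 := (x 0).isLt
    have h2 := (y 0).isLt
    exact absurd (Fin.ext (by omega) : x 0 = y 0) ((hne 0).2 TDB.zero_mem_flipF)
  have hcnt := hind.2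
  have hne' : ∀ v, y v ≠ x v ↔ v ∈ flipF d := fun v => ⟨fun h => (hne v).1 (Ne.symm h),
    fun h => Ne.symm ((hne v).2 h)⟩
  have hcnt' : ∀ S p, (occs y S p \ occs x S p).ncard = (occs x S p \ occs y S p).ncard :=
    fun S p => (hcnt S p).symm
  obtain ⟨IX, IY⟩ := TDB6.main_inj hd hne hcnt hbij hsub1 S hS hconn
  -- language equality
  have hlang : langOn x S = langOn y S := by
    ext q
    simp only [langOn, Set.mem_setOf_eq]
    constructor
    · rintro ⟨n, hn⟩
      have hocc : n ∈ occs x S (fun v => if h : v ∈ S then q ⟨v, h⟩ else 0) := by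
        intro t ht
        show _ = dite (t ∈ S) (fun h => q ⟨t, h⟩) (fun _ => 0)
        rw [dif_pos ht]
        exact hn ⟨t, ht⟩
      obtain ⟨m, hm⟩ := TDB2.balance_nonempty hne hcnt ⟨n, hocc⟩
      refine ⟨m, fun s => ?_⟩
      have h2 : _ = dite ((s : Zd d) ∈ S) (fun h => q ⟨s, h⟩) (fun _ => 0) := hm s.1 s.2
      rwa [dif_pos s.2] at h2
    · rintro ⟨n, hn⟩
      have hocc : n ∈ occs y S (fun v => if h : v ∈ S then q ⟨v, h⟩ else 0) := by
        intro t ht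
        show _ = dite (t ∈ S) (fun h => q ⟨t, h⟩) (fun _ => 0)
        rw [dif_pos ht]
        exact hn ⟨t, ht⟩
      obtain ⟨m, hm⟩ := TDB2.balance_nonempty hne' hcnt' ⟨n, hocc⟩
      refine ⟨m, fun s => ?_⟩
      have h2 : _ = dite ((s : Zd d) ∈ S) (fun h => q ⟨s, h⟩) (fun _ => 0) := hm s.1 s.2
      rwa [dif_pos s.2] at h2
  refine ⟨hlang, ⟨fun n _ => ⟨n, fun s => rfl⟩, ?_, ?_⟩, ⟨?_, ?_, ?_⟩, ?_⟩
  · -- InjOn x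
    intro n hn m hm h
    exact IX n (Finset.mem_coe.1 hn) m (Finset.mem_coe.1 hm)
      (fun t ht => congrFun h ⟨t, ht⟩)
  · -- SurjOn x
    rintro q ⟨n, hn⟩
    have hocc : n ∈ occs x S (fun v => if h : v ∈ S then q ⟨v, h⟩ else 0) := by
      intro t ht
      show _ = dite (t ∈ S) (fun h => q ⟨t, h⟩) (fun _ => 0)
      rw [dif_pos ht]
      exact hn ⟨t, ht⟩
    obtain ⟨m, hmW, hmO⟩ := TDB6.occ_window_x hne hcnt hbij hsub1 hS ⟨n, hocc⟩
    refine ⟨m, Finset.mem_coe.2 hmW, funext fun s => ?_⟩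
    have h2 : _ = dite ((s : Zd d) ∈ S) (fun h => q ⟨s, h⟩) (fun _ => 0) := hmO s.1 s.2
    rwa [dif_pos s.2] at h2
  · -- MapsTo y
    intro n _
    rw [hlang]
    exact ⟨n, fun s => rfl⟩
  · -- InjOn y
    intro n hn m hm h
    exact IY n (Finset.mem_coe.1 hn) m (Finset.mem_coe.1 hm)
      (fun t ht => congrFun h ⟨t, ht⟩)
  · -- SurjOn y
    rintro q hq
    rw [hlang] at hq
    obtain ⟨n, hn⟩ := hq
    have hocc : n ∈ occs y S (fun v => if h : v ∈ S then q ⟨v, h⟩ else 0) := by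
      intro t ht
      show _ = dite (t ∈ S) (fun h => q ⟨t, h⟩) (fun _ => 0)
      rw [dif_pos ht]
      exact hn ⟨t, ht⟩
    obtain ⟨m, hmW, hmO⟩ := TDB6.occ_window_y hne hcnt hbij hsub1 hS ⟨n, hocc⟩
    refine ⟨m, Finset.mem_coe.2 hmW, funext fun s => ?_⟩
    have h2 : _ = dite ((s : Zd d) ∈ S) (fun h => q ⟨s, h⟩) (fun _ => 0) := hmO s.1 s.2
    rwa [dif_pos s.2] at h2
  · -- the two maps differ
    intro hEq
    obtain ⟨s₀, hs₀⟩ := hS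
    have hmem : (-s₀ : Zd d) ∈ (↑(fms (flipF d) S) : Set (Zd d)) :=
      Finset.mem_coe.2 (TDB.mem_fms.2 ⟨s₀, hs₀,
        by rw [show -s₀ + s₀ = (0 : Zd d) by ring]; exact TDB.zero_mem_flipF⟩)
    have h2 := congrFun (hEq hmem) ⟨s₀, hs₀⟩
    simp only at h2
    rw [show -s₀ + s₀ = (0 : Zd d) by ring] at h2
    exact (hne 0).2 TDB.zero_mem_flipF h2

/-- For an indistinguishable asymptotic pair satisfying the flip condition
and a finite nonempty connected `S`, the maps `n ↦ σⁿ(x)|_S` and `n ↦ σⁿ(y)|_S` are two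
distinct bijections from `F - S` onto `ℒ_S(x) = ℒ_S(y)`. -/
theorem two_distinct_bijections {d : ℕ} (x y : Zd d → Fin (d + 1))
    (hind : Indistinguishable x y) (hflip : FlipCondition x y)
    (S : Finset (Zd d)) (hS : S.Nonempty) (hconn : FinsetConnected S) :
    langOn x S = langOn y S ∧
    Set.BijOn (fun n : Zd d => fun s : S => x (n + (s : Zd d)))
      (↑(fms (flipF d) S)) (langOn x S) ∧
    Set.BijOn (fun n : Zd d => fun s : S => y (n + (s : Zd d)))
      (↑(fms (flipF d) S)) (langOn x S) ∧
    ¬ Set.EqOn (fun n : Zd d => fun s : S => x (n + (s : Zd d)))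
      (fun n : Zd d => fun s : S => y (n + (s : Zd d))) (↑(fms (flipF d) S)) := by
  exact two_distinct_bijections' x y hind hflip S hS hconn
end

section
/- Let α ∈ [0,1)^d be totally irrational. With c_α(n) = Σ_i (⌊α_i + n·α⌋ − ⌊n·α⌋) and c'_α(n) = Σ_i (⌈α_i + n·α⌉ − ⌈n·α⌉), one has c_α(0) = 0, c'_α(0) = d, c_α(−e_i) = #{j : α_j ≥ α_i}, and c'_α(−e_i) = #{j : α_j > α_i}; in particular both restrictions of c_α and c'_α to F = {0,−e₁,…,−e_d} are bijections onto {0,1,…,d}, and c_α(n) − c'_α(n) ≡ 1 (mod d+1) for all n ∈ F. -/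
section aux
variable {d : ℕ} {α : Fin d → ℝ}

lemma aux_alpha_pos (hα : ∀ i, α i ∈ Set.Ico (0 : ℝ) 1)
    (hirr : TotallyIrrational α) (i : Fin d) : 0 < α i := by
  rcases lt_or_eq_of_le (hα i).1 with h | h
  · exact h
  · exfalso
    have := (hirr 0 (Pi.single i 1) (by
      simp [Pi.single_apply, ite_mul, apply_ite (fun q : ℚ => (q : ℝ)), ← h])).2
    have := congrFun this i
    simp [Pi.single_apply] at this

lemma aux_alpha_ne (hirr : TotallyIrrational α) {i j : Fin d}
    (h : i ≠ j) : α i ≠ α j := by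
  intro he
  have := (hirr 0 (Pi.single i 1 - Pi.single j 1) (by
    simp only [Pi.sub_apply, Pi.single_apply, Rat.cast_sub, sub_mul, Finset.sum_sub_distrib,
      apply_ite (fun q : ℚ => (q : ℝ)), ite_mul, one_mul, zero_mul, Rat.cast_one, Rat.cast_zero,
      Finset.sum_ite_eq', Finset.mem_univ, if_true]
    rw [he]; ring)).2
  have := congrFun this i
  simp [Pi.single_apply, h] at this

lemma aux_dotA_zero : dotA α 0 = 0 := by simp [dotA]

lemma aux_dotA_neg_single (i : Fin d) : dotA α (-(Pi.single i 1 : Zd d)) = -α i := by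
  simp [dotA, Pi.single_apply, ite_mul, apply_ite]

lemma aux_cLow_zero (hα : ∀ i, α i ∈ Set.Ico (0 : ℝ) 1) : cLow α 0 = 0 := by
  unfold cLow
  rw [aux_dotA_zero]
  apply Finset.sum_eq_zero
  intro i _
  have h0 : ⌊α i + 0⌋ = 0 := by
    rw [Int.floor_eq_iff]
    push_cast
    constructor <;> linarith [(hα i).1, (hα i).2]
  rw [h0]
  simp

lemma aux_cUp_zero (hα : ∀ i, α i ∈ Set.Ico (0 : ℝ) 1)
    (hirr : TotallyIrrational α) : cUp α 0 = d := by
  unfold cUp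
  rw [aux_dotA_zero]
  have : ∀ i ∈ Finset.univ, (⌈α i + 0⌉ - ⌈(0:ℝ)⌉) = 1 := by
    intro i _
    have h0 : ⌈α i + 0⌉ = 1 := by
      rw [Int.ceil_eq_iff]
      constructor
      · push_cast; linarith [aux_alpha_pos hα hirr i]
      · push_cast; linarith [(hα i).2]
    rw [h0, Int.ceil_zero, sub_zero]
  rw [Finset.sum_congr rfl this]
  simp

end aux

/-- Number of `j` with `α j ≥ α i`. -/
noncomputable def gL {d : ℕ} (α : Fin d → ℝ) (i : Fin d) : ℕ :=
  (Finset.univ.filter fun j => α i ≤ α j).card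

/-- Number of `j` with `α j > α i`. -/
noncomputable def gU {d : ℕ} (α : Fin d → ℝ) (i : Fin d) : ℕ :=
  (Finset.univ.filter fun j => α i < α j).card

section aux2
variable {d : ℕ} {α : Fin d → ℝ}

lemma aux_cLow_neg (hα : ∀ i, α i ∈ Set.Ico (0 : ℝ) 1)
    (hirr : TotallyIrrational α) (i : Fin d) :
    cLow α (-(Pi.single i 1 : Zd d)) = (gL α i : ℤ) := by
  unfold cLow gL
  rw [aux_dotA_neg_single]
  have h1 : ⌊-α i⌋ = -1 := by
    rw [Int.floor_eq_iff]
    constructor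
    · push_cast; linarith [(hα i).2]
    · push_cast; linarith [aux_alpha_pos hα hirr i]
  rw [← Finset.sum_boole]
  apply Finset.sum_congr rfl
  intro j _
  rw [h1]
  by_cases hj : α i ≤ α j
  · have : ⌊α j + -α i⌋ = 0 := by
      rw [Int.floor_eq_iff]
      push_cast
      constructor
      · linarith
      · linarith [(hα j).2, aux_alpha_pos hα hirr i]
    simp [this, hj]
  · have : ⌊α j + -α i⌋ = -1 := by
      rw [Int.floor_eq_iff]
      constructor
      · push_cast; linarith [(hα j).1, (hα i).2]
      · push_cast; linarith [not_le.mp hj]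
    simp [this, hj]

lemma aux_cUp_neg (hα : ∀ i, α i ∈ Set.Ico (0 : ℝ) 1)
    (hirr : TotallyIrrational α) (i : Fin d) :
    cUp α (-(Pi.single i 1 : Zd d)) = (gU α i : ℤ) := by
  unfold cUp gU
  rw [aux_dotA_neg_single]
  have h1 : ⌈-α i⌉ = 0 := by
    rw [Int.ceil_eq_iff]
    constructor
    · push_cast; linarith [(hα i).2]
    · push_cast; linarith [aux_alpha_pos hα hirr i]
  rw [← Finset.sum_boole]
  apply Finset.sum_congr rfl
  intro j _
  rw [h1]
  by_cases hj : α i < α j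
  · have : ⌈α j + -α i⌉ = 1 := by
      rw [Int.ceil_eq_iff]
      constructor
      · push_cast; linarith
      · push_cast; linarith [(hα j).2, aux_alpha_pos hα hirr i]
    simp [this, hj]
  · have : ⌈α j + -α i⌉ = 0 := by
      rw [Int.ceil_eq_iff]
      constructor
      · push_cast; linarith [(hα j).1, (hα i).2]
      · push_cast; linarith [not_lt.mp hj]
    simp [this, hj]


lemma aux_gL_lt {i i' : Fin d} (h : α i < α i') : gL α i' < gL α i := by
  apply Finset.card_lt_card
  rw [Finset.ssubset_iff_of_subset]
  · exact ⟨i, Finset.mem_filter.mpr ⟨Finset.mem_univ i, le_refl _⟩,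
      by simp [not_le.mpr h]⟩
  · intro j hj
    simp only [Finset.mem_filter, Finset.mem_univ, true_and] at hj ⊢
    exact le_trans h.le hj

lemma aux_gL_inj (hirr : TotallyIrrational α) : Function.Injective (gL α) := by
  intro i i' he
  by_contra hne
  rcases lt_trichotomy (α i) (α i') with h | h | h
  · exact (aux_gL_lt h).ne he.symm
  · exact aux_alpha_ne hirr hne h
  · exact (aux_gL_lt h).ne he

lemma aux_gL_eq (hirr : TotallyIrrational α) (i : Fin d) : gL α i = gU α i + 1 := by
  unfold gL gU
  have h : (Finset.univ.filter fun j => α i ≤ α j) =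
      insert i (Finset.univ.filter fun j => α i < α j) := by
    ext j
    simp only [Finset.mem_filter, Finset.mem_univ, true_and, Finset.mem_insert]
    constructor
    · intro hj
      rcases eq_or_ne j i with rfl | hne
      · exact Or.inl rfl
      · exact Or.inr (lt_of_le_of_ne hj (aux_alpha_ne hirr hne.symm))
    · rintro (rfl | hj)
      · exact le_refl _
      · exact hj.le
  rw [h, Finset.card_insert_of_notMem (by simp)]

lemma aux_gL_pos (i : Fin d) : 1 ≤ gL α i :=
  Finset.card_pos.mpr ⟨i, by simp⟩

lemma aux_gL_le (i : Fin d) : gL α i ≤ d :=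
  le_trans (Finset.card_filter_le _ _) (by simp)

lemma aux_gU_lt (hirr : TotallyIrrational α) (i : Fin d) : gU α i < d := by
  have h1 := aux_gL_eq hirr i
  have h2 := aux_gL_le (α := α) i
  omega

lemma aux_gU_inj (hirr : TotallyIrrational α) : Function.Injective (gU α) := by
  intro i i' he
  apply aux_gL_inj hirr
  rw [aux_gL_eq hirr, aux_gL_eq hirr, he]

lemma aux_gL_image (hirr : TotallyIrrational α) :
    Finset.univ.image (gL α) = Finset.Icc 1 d := by
  apply Finset.eq_of_subset_of_card_le
  · intro m hm
    obtain ⟨i, -, rfl⟩ := Finset.mem_image.mp hm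
    exact Finset.mem_Icc.mpr ⟨aux_gL_pos i, aux_gL_le i⟩
  · rw [Finset.card_image_of_injective _ (aux_gL_inj hirr), Finset.card_univ,
      Fintype.card_fin, Nat.card_Icc]
    omega

lemma aux_gU_image (hirr : TotallyIrrational α) :
    Finset.univ.image (gU α) = Finset.range d := by
  apply Finset.eq_of_subset_of_card_le
  · intro m hm
    obtain ⟨i, -, rfl⟩ := Finset.mem_image.mp hm
    exact Finset.mem_range.mpr (aux_gU_lt hirr i)
  · rw [Finset.card_image_of_injective _ (aux_gU_inj hirr), Finset.card_univ,
      Fintype.card_fin, Finset.card_range]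

lemma aux_mem_flipF {n : Zd d} :
    n ∈ flipF d ↔ n = 0 ∨ ∃ i, n = -(Pi.single i 1 : Zd d) := by
  simp [flipF, eq_comm]

end aux2

/-- Values of `c_α` and `c'_α` on `F = {0, -e₁, …, -e_d}`:
`c_α(0) = 0`, `c'_α(0) = d`, `c_α(-eᵢ) = #{j : αⱼ ≥ αᵢ}`, `c'_α(-eᵢ) = #{j : αⱼ > αᵢ}`;
both restrictions to `F` are bijections onto `{0,…,d}`, and
`c_α(n) - c'_α(n) ≡ 1 (mod d+1)` for all `n ∈ F`. -/
theorem sturmian_values_on_F (d : ℕ) (α : Fin d → ℝ)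
    (hα : ∀ i, α i ∈ Set.Ico (0 : ℝ) 1) (hirr : TotallyIrrational α) :
    cLow α 0 = 0 ∧ cUp α 0 = d ∧
    (∀ i : Fin d, cLow α (-(Pi.single i 1 : Zd d)) = ({j : Fin d | α i ≤ α j}.ncard : ℤ)) ∧
    (∀ i : Fin d, cUp α (-(Pi.single i 1 : Zd d)) = ({j : Fin d | α i < α j}.ncard : ℤ)) ∧
    Set.BijOn (cLow α) (↑(flipF d)) (Set.Icc (0 : ℤ) d) ∧
    Set.BijOn (cUp α) (↑(flipF d)) (Set.Icc (0 : ℤ) d) ∧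
    ∀ n ∈ flipF d, Int.ModEq ((d : ℤ) + 1) (cLow α n - cUp α n) 1 := by
  have hL : ∀ i : Fin d, ({j : Fin d | α i ≤ α j}.ncard : ℤ) = (gL α i : ℤ) := by
    intro i
    rw [show {j : Fin d | α i ≤ α j} = ↑(Finset.univ.filter fun j => α i ≤ α j) by
      ext j; simp, Set.ncard_coe_finset]
    rfl
  have hU : ∀ i : Fin d, ({j : Fin d | α i < α j}.ncard : ℤ) = (gU α i : ℤ) := by
    intro i
    rw [show {j : Fin d | α i < α j} = ↑(Finset.univ.filter fun j => α i < α j) by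
      ext j; simp, Set.ncard_coe_finset]
    rfl
  have h0F : (0 : Zd d) ∈ flipF d := aux_mem_flipF.mpr (Or.inl rfl)
  have hiF : ∀ i : Fin d, -(Pi.single i 1 : Zd d) ∈ flipF d :=
    fun i => aux_mem_flipF.mpr (Or.inr ⟨i, rfl⟩)
  refine ⟨aux_cLow_zero hα, aux_cUp_zero hα hirr,
    fun i => by rw [aux_cLow_neg hα hirr, hL],
    fun i => by rw [aux_cUp_neg hα hirr, hU], ⟨?_, ?_, ?_⟩, ⟨?_, ?_, ?_⟩, ?_⟩
  · -- MapsTo cLow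
    intro n hn
    rw [Finset.mem_coe, aux_mem_flipF] at hn
    rcases hn with rfl | ⟨i, rfl⟩
    · rw [aux_cLow_zero hα]
      exact Set.mem_Icc.mpr ⟨le_refl 0, by positivity⟩
    · rw [aux_cLow_neg hα hirr]
      exact Set.mem_Icc.mpr ⟨by positivity, by exact_mod_cast aux_gL_le i⟩
  · -- InjOn cLow
    intro m hm n hn he
    rw [Finset.mem_coe, aux_mem_flipF] at hm hn
    rcases hm with rfl | ⟨i, rfl⟩ <;> rcases hn with rfl | ⟨j, rfl⟩
    · rfl
    · rw [aux_cLow_zero hα, aux_cLow_neg hα hirr] at he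
      have := aux_gL_pos (α := α) j; omega
    · rw [aux_cLow_zero hα, aux_cLow_neg hα hirr] at he
      have := aux_gL_pos (α := α) i; omega
    · rw [aux_cLow_neg hα hirr, aux_cLow_neg hα hirr] at he
      have : gL α i = gL α j := by exact_mod_cast he
      rw [aux_gL_inj hirr this]
  · -- SurjOn cLow
    intro t ht
    simp only [Set.mem_Icc] at ht
    by_cases h0 : t = 0
    · exact ⟨0, h0F, by rw [aux_cLow_zero hα, h0]⟩
    · have h1 : t.toNat ∈ Finset.Icc 1 d := by rw [Finset.mem_Icc]; omega
      rw [← aux_gL_image hirr] at h1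
      obtain ⟨i, -, hi⟩ := Finset.mem_image.mp h1
      exact ⟨-(Pi.single i 1), hiF i, by rw [aux_cLow_neg hα hirr, hi]; omega⟩
  · -- MapsTo cUp
    intro n hn
    rw [Finset.mem_coe, aux_mem_flipF] at hn
    rcases hn with rfl | ⟨i, rfl⟩
    · rw [aux_cUp_zero hα hirr]
      exact Set.mem_Icc.mpr ⟨by positivity, le_refl _⟩
    · rw [aux_cUp_neg hα hirr]
      have := aux_gU_lt hirr i
      exact Set.mem_Icc.mpr ⟨by positivity, by omega⟩
  · -- InjOn cUp
    intro m hm n hn he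
    rw [Finset.mem_coe, aux_mem_flipF] at hm hn
    rcases hm with rfl | ⟨i, rfl⟩ <;> rcases hn with rfl | ⟨j, rfl⟩
    · rfl
    · rw [aux_cUp_zero hα hirr, aux_cUp_neg hα hirr] at he
      have := aux_gU_lt hirr j; omega
    · rw [aux_cUp_zero hα hirr, aux_cUp_neg hα hirr] at he
      have := aux_gU_lt hirr i; omega
    · rw [aux_cUp_neg hα hirr, aux_cUp_neg hα hirr] at he
      have : gU α i = gU α j := by exact_mod_cast he
      rw [aux_gU_inj hirr this]
  · -- SurjOn cUp
    intro t ht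
    simp only [Set.mem_Icc] at ht
    by_cases h0 : t = d
    · exact ⟨0, h0F, by rw [aux_cUp_zero hα hirr, h0]⟩
    · have h1 : t.toNat ∈ Finset.range d := by rw [Finset.mem_range]; omega
      rw [← aux_gU_image hirr] at h1
      obtain ⟨i, -, hi⟩ := Finset.mem_image.mp h1
      exact ⟨-(Pi.single i 1), hiF i, by rw [aux_cUp_neg hα hirr, hi]; omega⟩
  · -- ModEq
    intro n hn
    rw [aux_mem_flipF] at hn
    rcases hn with rfl | ⟨i, rfl⟩
    · rw [aux_cLow_zero hα, aux_cUp_zero hα hirr]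
      exact (Int.modEq_iff_dvd.mpr ⟨1, by ring⟩)
    · rw [aux_cLow_neg hα hirr, aux_cUp_neg hα hirr]
      have := aux_gL_eq hirr i
      have h2 : (gL α i : ℤ) - (gU α i : ℤ) = 1 := by omega
      rw [h2]
end

section
/- Let α ∈ [0,1)^d with at least one irrational coordinate and ρ ∈ ℝ. Then the configuration s_{α,ρ}(n) = Σ_{i=1}^d (⌊α_i + n·α + ρ⌋ − ⌊n·α + ρ⌋) is uniformly recurrent: for every pattern p appearing in s_{α,ρ} (with finite support S) there exists a finite K ⊆ ℤ^d such that for every u ∈ ℤ^d there exists k ∈ K with s_{α,ρ}(u+k+s) = p(s) for all s ∈ S. -/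
set_option maxHeartbeats 1000000


private lemma floor_shift {c t : ℝ} (ht0 : 0 ≤ t) (ht : t < (⌊c⌋ : ℝ) + 1 - c) :
    ⌊c + t⌋ = ⌊c⌋ := by
  rw [Int.floor_eq_iff]
  constructor
  · have := Int.floor_le c; linarith
  · linarith

private lemma dotA_add' {d : ℕ} (α : Fin d → ℝ) (m n : Zd d) :
    dotA α (m + n) = dotA α m + dotA α n := by
  simp [dotA, add_mul, Finset.sum_add_distrib]

private lemma dotA_single' {d : ℕ} (α : Fin d → ℝ) (i₀ : Fin d) (a : ℤ) :
    dotA α (Pi.single i₀ a) = (a : ℝ) * α i₀ := by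
  rw [dotA, Finset.sum_eq_single i₀]
  · simp
  · intro b _ hb; simp [Pi.single_apply, hb]
  · simp

private lemma exists_small (β : ℝ) (hb : Irrational β) {ε : ℝ} (hε : 0 < ε) :
    ∃ m q : ℤ, 0 < (m : ℝ) * β + q ∧ (m : ℝ) * β + q < ε := by
  rcases (AddSubgroup.closure {(1 : ℝ), β}).dense_or_cyclic with hd | ⟨a, ha⟩
  · obtain ⟨g, hg, hg0, hgε⟩ := hd.exists_between hε
    rw [SetLike.mem_coe, AddSubgroup.mem_closure_pair] at hg
    obtain ⟨q, m, hqm⟩ := hg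
    refine ⟨m, q, ?_, ?_⟩ <;>
      simp only [zsmul_eq_mul, mul_one] at hqm <;> rw [show (m : ℝ) * β + q = q + m * β by ring,
        hqm]
    · exact hg0
    · exact hgε
  · exfalso
    have h1 : (1 : ℝ) ∈ AddSubgroup.closure {(1 : ℝ), β} :=
      AddSubgroup.subset_closure (by simp)
    have h2 : β ∈ AddSubgroup.closure {(1 : ℝ), β} :=
      AddSubgroup.subset_closure (by simp)
    rw [ha, AddSubgroup.mem_closure_singleton] at h1 h2
    obtain ⟨n, hn⟩ := h1
    obtain ⟨m, hm⟩ := h2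
    have hn0 : n ≠ 0 := by rintro rfl; simp at hn
    rw [zsmul_eq_mul] at hn hm
    have hβ : (n : ℝ) * β = m := by
      calc (n : ℝ) * β = (m : ℝ) * ((n : ℝ) * a) := by rw [← hm]; ring
        _ = m := by rw [hn, mul_one]
    refine hb ⟨(m : ℚ) / (n : ℚ), ?_⟩
    have hnR : (n : ℝ) ≠ 0 := Int.cast_ne_zero.mpr hn0
    push_cast
    rw [div_eq_iff hnR]
    linear_combination -hβ

/-- If some coordinate of `α` is irrational, then `s_{α,ρ}` is uniformly
recurrent: every pattern appearing in it appears with bounded gaps. -/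
theorem sturmian_uniformly_recurrent (d : ℕ) (α : Fin d → ℝ)
    (hα : ∀ i, α i ∈ Set.Ico (0 : ℝ) 1) (hirr : ∃ i, Irrational (α i)) (ρ : ℝ)
    (S : Finset (Zd d)) (p : Zd d → ℤ)
    (happ : ∃ n : Zd d, ∀ s ∈ S, sLow α ρ (n + s) = p s) :
    ∃ K : Finset (Zd d), ∀ u : Zd d, ∃ k ∈ K, ∀ s ∈ S, sLow α ρ (u + k + s) = p s := by
  rcases S.eq_empty_or_nonempty with rfl | hSne
  · exact ⟨{0}, fun u => ⟨0, Finset.mem_singleton_self 0, fun s hs => absurd hs (by simp)⟩⟩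
  obtain ⟨i₀, hi₀⟩ := hirr
  obtain ⟨n₀, hn₀⟩ := happ
  set t₀ : ℝ := dotA α n₀ + ρ with ht₀
  set G : ℝ → ℝ := fun c => (⌊c⌋ : ℝ) + 1 - c with hG
  have hGpos : ∀ c, 0 < G c := fun c => sub_pos.mpr (Int.lt_floor_add_one c)
  set ε : ℝ := S.inf' hSne fun s => min (G (dotA α s + t₀))
      ((Finset.univ.inf' ⟨i₀, Finset.mem_univ _⟩) fun i => G (α i + dotA α s + t₀)) with hε
  have hεpos : 0 < ε := by
    rw [hε, Finset.lt_inf'_iff]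
    intro s _
    refine lt_min (hGpos _) ?_
    refine (Finset.lt_inf'_iff _).2 ?_
    intro i _
    exact hGpos _
  have hle1 : ∀ s ∈ S, ε ≤ G (dotA α s + t₀) := fun s hs =>
    (Finset.inf'_le _ hs).trans (min_le_left _ _)
  have hle2 : ∀ s ∈ S, ∀ i, ε ≤ G (α i + dotA α s + t₀) := fun s hs i =>
    (Finset.inf'_le _ hs).trans ((min_le_right _ _).trans
      (Finset.inf'_le _ (Finset.mem_univ i)))
  have key : ∀ n : Zd d, ∀ c : ℤ, 0 ≤ dotA α n + ρ - t₀ - c →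
      dotA α n + ρ - t₀ - c < ε → ∀ s ∈ S, sLow α ρ (n + s) = p s := by
    intro n c ht0 htε s hs
    have e : ∀ w : ℝ, ε ≤ G w →
        ⌊w + (dotA α n + ρ - t₀ - c) + c⌋ = ⌊w⌋ + c := by
      intro w hw
      rw [show w + (dotA α n + ρ - t₀ - c) + (c : ℝ)
            = (w + (dotA α n + ρ - t₀ - c)) + (c : ℝ) by ring,
        Int.floor_add_intCast, floor_shift ht0 (lt_of_lt_of_le htε hw)]
    rw [← hn₀ s hs]
    unfold sLow
    apply Finset.sum_congr rfl
    intro i _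
    have h1 : α i + dotA α (n + s) + ρ
        = (α i + dotA α s + t₀) + (dotA α n + ρ - t₀ - c) + c := by
      rw [dotA_add']; ring
    have h2 : dotA α (n + s) + ρ
        = (dotA α s + t₀) + (dotA α n + ρ - t₀ - c) + c := by
      rw [dotA_add']; ring
    have h3 : α i + dotA α (n₀ + s) + ρ = α i + dotA α s + t₀ := by
      rw [dotA_add', ht₀]; ring
    have h4 : dotA α (n₀ + s) + ρ = dotA α s + t₀ := by
      rw [dotA_add', ht₀]; ring
    rw [h1, h2, h3, h4, e _ (hle2 s hs i), e _ (hle1 s hs)]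
    ring
  obtain ⟨m, q, hg0, hgε⟩ := exists_small (α i₀) hi₀ hεpos
  set g : ℝ := (m : ℝ) * α i₀ + q with hgdef
  set M : ℤ := ⌈1 / g⌉ with hM
  refine ⟨(Finset.Icc (0 : ℤ) M).image fun j => (Pi.single i₀ (j * m) : Zd d), fun u => ?_⟩
  set x : ℝ := dotA α u + ρ - t₀ with hx
  set c₁ : ℤ := ⌈x⌉ with hc₁
  set j : ℤ := ⌈((c₁ : ℝ) - x) / g⌉ with hj
  have hc₁x : x ≤ (c₁ : ℝ) := Int.le_ceil x
  have hc₁x' : (c₁ : ℝ) < x + 1 := Int.ceil_lt_add_one x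
  have hj0 : 0 ≤ j := Int.ceil_nonneg (div_nonneg (by linarith) hg0.le)
  have hjM : j ≤ M := by
    rw [hj, hM]
    apply Int.ceil_le_ceil
    exact (div_le_div_iff_of_pos_right hg0).mpr (by linarith)
  have hjlb : (c₁ : ℝ) - x ≤ (j : ℝ) * g := by
    have h := Int.le_ceil (((c₁ : ℝ) - x) / g)
    rw [div_le_iff₀ hg0] at h
    simpa [hj] using h
  have hjub : (j : ℝ) * g < (c₁ : ℝ) - x + g := by
    have h := Int.ceil_lt_add_one (((c₁ : ℝ) - x) / g)
    have h2 := mul_lt_mul_of_pos_right h hg0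
    rw [add_mul, one_mul, div_mul_cancel₀ _ (ne_of_gt hg0)] at h2
    simpa [hj] using h2
  refine ⟨Pi.single i₀ (j * m), Finset.mem_image_of_mem _ (Finset.mem_Icc.mpr ⟨hj0, hjM⟩), ?_⟩
  have hcomp : dotA α (u + Pi.single i₀ (j * m)) + ρ - t₀ - ((c₁ - j * q : ℤ) : ℝ)
      = x + (j : ℝ) * g - c₁ := by
    rw [dotA_add', dotA_single', hx, hgdef]
    push_cast
    ring
  have h0 : 0 ≤ dotA α (u + Pi.single i₀ (j * m)) + ρ - t₀ - ((c₁ - j * q : ℤ) : ℝ) := by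
    rw [hcomp]; linarith
  have h1 : dotA α (u + Pi.single i₀ (j * m)) + ρ - t₀ - ((c₁ - j * q : ℤ) : ℝ) < ε := by
    rw [hcomp]; linarith
  exact key _ (c₁ - j * q) h0 h1
end
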